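/- arXiv:2211.15350 — 11 statements merged into one kernel-verified Lean document; each statement's English description precedes it below -/
import Mathlib

section
/- Let q ≥ 2 be a prime power, m ≥ 2, n = q^m - 1, and let i be an integer with 3 ≤ i ≤ m - (⌊(m-1)/2⌋ + ⌊(m-3)/3⌋). Then δ_i = (q-1)q^{m-1} - 1 - q^{⌊(m-1)/2⌋ + i - 2} is a q-cyclotomic coset leader modulo n, i.e., for every j with 1 ≤ j ≤ m-1, (δ_i · q^j mod n) > δ_i. -/
private lemma mod_helper (a x N : ℕ) (hx0 : 0 < x) (hxN : x ≤ N) (hdvd : N ∣ a + x) :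
    a % N = N - x := by
  obtain ⟨k, hk⟩ := hdvd
  match k, hk with
  | 0, hk => omega
  | (k' + 1), hk =>
  have hk' : N * (k' + 1) = N * k' + N := by ring
  have ha : a = N - x + N * k' := by omega
  rw [ha, Nat.add_mul_mod_self_left, Nat.mod_eq_of_lt (by omega)]

/-- δ_i = (q-1)q^{m-1} - 1 - q^{⌊(m-1)/2⌋+i-2} is a q-cyclotomic
coset leader modulo n = q^m - 1. -/
theorem stmt_0 (q m i : ℕ) (hq : IsPrimePow q) (hm : 2 ≤ m)
    (hi3 : 3 ≤ i) (hi : i ≤ m - ((m - 1) / 2 + (m - 3) / 3)) :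
    ∀ j : ℕ, 1 ≤ j → j ≤ m - 1 →
      ((q - 1) * q ^ (m - 1) - 1 - q ^ ((m - 1) / 2 + i - 2)) * q ^ j % (q ^ m - 1)
        > (q - 1) * q ^ (m - 1) - 1 - q ^ ((m - 1) / 2 + i - 2) := by
  intro j hj1 hj2
  have hq2 : 2 ≤ q := hq.two_le
  set e := (m - 1) / 2 + i - 2 with he
  have he1 : 1 ≤ e := by omega
  have he2 : e + 2 ≤ m := by omega
  have h2e : m ≤ 2 * e := by omega
  clear hi hi3 he
  obtain ⟨M, rfl⟩ : ∃ M, m = M + 2 := ⟨m - 2, by omega⟩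
  obtain ⟨J, rfl⟩ : ∃ J, j = J + 1 := ⟨j - 1, by omega⟩
  have hr1 : M + 2 - 1 = M + 1 := by omega
  have hr2 : J + 1 - 1 = J := by omega
  rw [hr1]
  have heM : e ≤ M := by omega
  have hJM : J ≤ M := by omega
  have hq1 : 1 < q := hq2
  have hpow : ∀ a b : ℕ, a ≤ b → q ^ a ≤ q ^ b :=
    fun a b h => Nat.pow_le_pow_right (by omega) h
  have hpow' : ∀ a b : ℕ, a < b → q ^ a < q ^ b :=
    fun a b h => Nat.pow_lt_pow_right hq1 h
  have k1 : 2 * q ^ (M + 1) ≤ q ^ (M + 2) := by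
    calc 2 * q ^ (M + 1) ≤ q * q ^ (M + 1) := Nat.mul_le_mul_right _ hq2
    _ = q ^ (M + 2) := by ring
  have k2 : 2 * q ^ M ≤ q ^ (M + 1) := by
    calc 2 * q ^ M ≤ q * q ^ M := Nat.mul_le_mul_right _ hq2
    _ = q ^ (M + 1) := by ring
  have k3 : 1 ≤ q ^ M := Nat.one_le_pow _ _ (by omega)
  have k4 : 1 ≤ q ^ e := Nat.one_le_pow _ _ (by omega)
  have hEC : (q - 1) * q ^ (M + 1) + q ^ (M + 1) = q ^ (M + 2) := by
    have hq' : q - 1 + 1 = q := by omega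
    calc (q - 1) * q ^ (M + 1) + q ^ (M + 1) = (q - 1 + 1) * q ^ (M + 1) := by ring
    _ = q * q ^ (M + 1) := by rw [hq']
    _ = q ^ (M + 2) := by ring
  have heM' : q ^ e ≤ q ^ M := hpow _ _ heM
  have h2 : q ^ e + 1 ≤ (q - 1) * q ^ (M + 1) := by
    have h3 : q ^ (M + 1) ≤ (q - 1) * q ^ (M + 1) :=
      Nat.le_mul_of_pos_left _ (by omega)
    omega
  have hD : ((q - 1) * q ^ (M + 1) - 1 - q ^ e) + (q ^ (M + 1) + q ^ e + 1) = q ^ (M + 2) := by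
    omega
  set D := (q - 1) * q ^ (M + 1) - 1 - q ^ e with hDdef
  set N := q ^ (M + 2) - 1 with hNdef
  set b := (e + (J + 1)) % (M + 2) with hbdef
  have hb : b < M + 2 := Nat.mod_lt _ (by omega)
  have hqm1 : 1 ≤ q ^ (M + 2) := Nat.one_le_pow _ _ (by omega)
  have hNZ : (N : ℤ) = (q : ℤ) ^ (M + 2) - 1 := by
    rw [hNdef]; push_cast [hqm1]; ring
  have hDZ : (D : ℤ) = (q : ℤ) ^ (M + 2) - (q : ℤ) ^ (M + 1) - (q : ℤ) ^ e - 1 := by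
    have := congrArg (Nat.cast : ℕ → ℤ) hD
    push_cast at this
    linarith
  -- divisibility
  have hdvd : N ∣ D * q ^ (J + 1) + (q ^ J + q ^ b) := by
    have hz : (N : ℤ) ∣ (D : ℤ) * (q : ℤ) ^ (J + 1) + ((q : ℤ) ^ J + (q : ℤ) ^ b) := by
      rw [hNZ, hDZ]
      rcases lt_or_ge (e + (J + 1)) (M + 2) with hc | hc
      · have hbe : b = e + (J + 1) := by rw [hbdef, Nat.mod_eq_of_lt hc]
        rw [hbe]
        exact ⟨(q : ℤ) ^ (J + 1) - (q : ℤ) ^ J, by ring⟩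
      · have hbe : e + (J + 1) = (M + 2) + b := by
          rw [hbdef, Nat.mod_eq_sub_mod hc, Nat.mod_eq_of_lt (by omega)]
          omega
        have hE : (q : ℤ) ^ e * (q : ℤ) ^ (J + 1) = (q : ℤ) ^ (M + 2) * (q : ℤ) ^ b := by
          rw [← pow_add, ← pow_add, hbe]
        exact ⟨(q : ℤ) ^ (J + 1) - (q : ℤ) ^ J - (q : ℤ) ^ b, by linear_combination (-1 : ℤ) * hE⟩
    have := Int.natCast_dvd_natCast.mpr (dvd_refl (D * q ^ (J + 1) + (q ^ J + q ^ b)))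
    exact_mod_cast hz
  have hJle : q ^ J ≤ q ^ M := hpow _ _ hJM
  have hble : q ^ b ≤ q ^ (M + 1) := hpow _ _ (by omega)
  have hx0 : 0 < q ^ J + q ^ b := by positivity
  have hxN : q ^ J + q ^ b ≤ N := by omega
  have hmod : D * q ^ (J + 1) % N = N - (q ^ J + q ^ b) :=
    mod_helper _ _ _ hx0 hxN hdvd
  rw [hmod]
  -- final inequality
  have hlt : q ^ J + q ^ b < q ^ (M + 1) + q ^ e := by
    rcases lt_or_ge (e + (J + 1)) (M + 2) with hc | hc
    · have hbe : b = e + (J + 1) := by rw [hbdef, Nat.mod_eq_of_lt hc]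
      rcases Nat.lt_or_ge b (M + 1) with hbM | hbM
      · have h1 : q ^ b ≤ q ^ M := hpow _ _ (by omega)
        omega
      · have hbeq : b = M + 1 := by omega
        have hJe : J < e := by omega
        have h1 : q ^ J < q ^ e := hpow' _ _ hJe
        rw [hbeq]
        omega
    · have hbe : b = e + (J + 1) - (M + 2) := by
        rw [hbdef, Nat.mod_eq_sub_mod hc, Nat.mod_eq_of_lt (by omega)]
      have hblt2 : b < e := by omega
      have h1 : q ^ b < q ^ e := hpow' _ _ hblt2
      have h2 : q ^ J ≤ q ^ M := hJle
      omega
  omega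
end

section
/- Let q ≥ 2 be a prime power, m ≥ 2, n = q^m - 1, and let i be an integer with 3 ≤ i ≤ m - (⌊(m-1)/2⌋ + ⌊(m-3)/3⌋). Then the q-cyclotomic coset of δ_i = (q-1)q^{m-1} - 1 - q^{⌊(m-1)/2⌋ + i - 2} modulo n has exactly m elements. -/
/-!
Write `n = q ^ m - 1` and `y = q ^ (m - 1) + q ^ s` with `s = ⌊(m-1)/2⌋ + i - 2`, so that
`δ_i = n - y` and `δ_i ≡ -y (mod n)`. If `δ_i q^e ≡ δ_i` for some `0 < e < m`, then `y q^e ≡ y`,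
and since `q ^ m ≡ 1` the left side reduces to a sum of two powers of `q` below `n`. Uniqueness of
base-`q` expansions forces `e = s + 1` and `2s + 1 ≡ m - 1 (mod m)`, which the bounds
`m ≤ 2s ≤ 2m - 4` coming from the range of `i` exclude.
-/

theorem pow_add_pow_le_pow {q a b k : ℕ} (hq : 2 ≤ q) (ha : a < k) (hb : b < k) :
    q ^ a + q ^ b ≤ q ^ k := by
  have hqa : q ^ a ≤ q ^ (k - 1) := Nat.pow_le_pow_right (by omega) (by omega)
  have hqb : q ^ b ≤ q ^ (k - 1) := Nat.pow_le_pow_right (by omega) (by omega)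
  have hpow : q * q ^ (k - 1) = q ^ k := mul_pow_sub_one (by omega) q
  nlinarith [Nat.mul_le_mul_right (q ^ (k - 1)) hq]

theorem pow_add_pow_lt_pow_sub_one {q a b k : ℕ} (hq : 2 ≤ q) (ha : a + 1 < k) (hb : b < k)
    (hk : 3 ≤ k) : q ^ a + q ^ b < q ^ k - 1 := by
  have hqa : q ^ a ≤ q ^ (k - 2) := Nat.pow_le_pow_right (by omega) (by omega)
  have hqb : q ^ b ≤ q ^ (k - 2) * q := by
    rw [← pow_succ]; exact Nat.pow_le_pow_right (by omega) (by omega)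
  have hpow : q ^ (k - 2) * q * q = q ^ k := by rw [← pow_succ, ← pow_succ]; congr 1; omega
  have hr : q ≤ q ^ (k - 2) := Nat.le_self_pow (by omega) q
  rw [Nat.lt_sub_iff_add_lt]
  nlinarith [Nat.mul_le_mul_left (q ^ (k - 2) * q) hq, Nat.mul_le_mul_left (q ^ (k - 2)) hq]

theorem eq_of_pow_add_pow_eq_pow_add_pow {q a s t k : ℕ} (hq : 2 ≤ q) (ha : a < k) (hs : s < k)
    (ht : t ≤ k) (h : q ^ a + q ^ t = q ^ k + q ^ s) : a = s ∧ t = k := by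
  obtain rfl : t = k := by
    by_contra htk
    have := pow_add_pow_le_pow hq ha (lt_of_le_of_ne ht htk)
    have := Nat.pow_pos (n := s) (by omega : 0 < q)
    omega
  exact ⟨Nat.pow_right_injective hq (show q ^ a = q ^ s by omega), rfl⟩

theorem natCast_pow_eq_one_zmod_pow_sub_one {q : ℕ} (hq : 0 < q) (m : ℕ) :
    (q : ZMod (q ^ m - 1)) ^ m = 1 := by
  have h := ZMod.natCast_self (q ^ m - 1)
  rwa [Nat.cast_sub (Nat.one_le_pow m q hq), Nat.cast_pow, Nat.cast_one, sub_eq_zero] at h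

theorem card_image_mul_pow_mod {q m x : ℕ} (hq : 0 < q)
    (h : ∀ e, 0 < e → e < m → (x : ZMod (q ^ m - 1)) * q ^ e ≠ x) :
    ((Finset.range m).image fun j => x * q ^ j % (q ^ m - 1)).card = m := by
  suffices hinj : ∀ a b, a < b → b < m →
      x * q ^ a % (q ^ m - 1) ≠ x * q ^ b % (q ^ m - 1) by
    rw [Finset.card_image_of_injOn, Finset.card_range]
    intro a ha b hb hab
    simp only [Finset.coe_range, Set.mem_Iio] at ha hb
    rcases lt_trichotomy a b with hlt | heq | hgt
    · exact absurd hab (hinj a b hlt hb)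
    · exact heq
    · exact absurd hab.symm (hinj b a hgt ha)
  intro a b hab hbm hmod
  have hunit : IsUnit (q : ZMod (q ^ m - 1)) :=
    IsUnit.of_pow_eq_one (natCast_pow_eq_one_zmod_pow_sub_one hq m) (by omega)
  rw [← ZMod.natCast_eq_natCast_iff', Nat.cast_mul, Nat.cast_mul, Nat.cast_pow, Nat.cast_pow,
    show b = a + (b - a) by omega, pow_add, ← mul_assoc, mul_right_comm] at hmod
  exact h (b - a) (by omega) (by omega) ((hunit.pow a).mul_right_cancel hmod).symm

theorem natCast_pow_pred_add_pow_mul_pow_ne {q m s e : ℕ} (hq : 2 ≤ q) (hs : s + 2 ≤ m)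
    (hms : m ≤ 2 * s) (he : 0 < e) (hem : e < m) :
    ((q ^ (m - 1) + q ^ s : ℕ) : ZMod (q ^ m - 1)) * q ^ e ≠ (q ^ (m - 1) + q ^ s : ℕ) := by
  intro h
  have hpow := natCast_pow_eq_one_zmod_pow_sub_one (by omega : 0 < q) m
  have hrot : ((q ^ (m - 1) + q ^ s : ℕ) : ZMod (q ^ m - 1)) * q ^ e =
      (q ^ (e - 1) + q ^ ((s + e) % m) : ℕ) := by
    push_cast
    rw [add_mul, ← pow_add, ← pow_add, pow_eq_pow_mod (s + e) hpow,
      show m - 1 + e = e - 1 + m by omega, pow_add, hpow, mul_one]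
  have hrem_lt : (s + e) % m < m := Nat.mod_lt _ (by omega)
  rw [hrot, ZMod.natCast_eq_natCast_iff',
    Nat.mod_eq_of_lt (pow_add_pow_lt_pow_sub_one (a := e - 1) hq (by omega) hrem_lt (by omega)),
    Nat.mod_eq_of_lt ((add_comm _ _).trans_lt
      (pow_add_pow_lt_pow_sub_one (a := s) (b := m - 1) hq (by omega) (by omega) (by omega)))] at h
  obtain ⟨hes, hrem⟩ := eq_of_pow_add_pow_eq_pow_add_pow hq (by omega) (by omega) (by omega) h
  rw [Nat.mod_eq_sub_mod (by omega), Nat.mod_eq_of_lt (by omega)] at hrem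
  omega

theorem sub_one_mul_pow_pred_sub_one_sub_pow_add {q m s : ℕ} (hq : 2 ≤ q) (hs : s + 2 ≤ m) :
    (q - 1) * q ^ (m - 1) - 1 - q ^ s + (q ^ (m - 1) + q ^ s) = q ^ m - 1 := by
  have hsum : (q - 1) * q ^ (m - 1) + q ^ (m - 1) = q ^ m := by
    rw [← Nat.succ_mul, Nat.succ_eq_add_one, Nat.sub_add_cancel (by omega),
      mul_pow_sub_one (by omega)]
  have hlt : q ^ s < q ^ (m - 1) := Nat.pow_lt_pow_right hq (by omega)
  have hle : q ^ (m - 1) ≤ (q - 1) * q ^ (m - 1) := Nat.le_mul_of_pos_left _ (by omega)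
  omega

theorem stmt_1_general (q m i : ℕ) (hq : IsPrimePow q)
    (hi3 : 3 ≤ i) (hi : i ≤ m - ((m - 1) / 2 + (m - 3) / 3)) :
    (Finset.image
      (fun j : ℕ =>
        ((q - 1) * q ^ (m - 1) - 1 - q ^ ((m - 1) / 2 + i - 2)) * q ^ j % (q ^ m - 1))
      (Finset.range m)).card = m := by
  have hq2 : 2 ≤ q := hq.two_le
  set s := (m - 1) / 2 + i - 2
  have hs : s + 2 ≤ m := by omega
  have hms : m ≤ 2 * s := by omega
  have hneg : (((q - 1) * q ^ (m - 1) - 1 - q ^ s : ℕ) : ZMod (q ^ m - 1)) =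
      -((q ^ (m - 1) + q ^ s : ℕ) : ZMod (q ^ m - 1)) := by
    rw [eq_neg_iff_add_eq_zero, ← Nat.cast_add, sub_one_mul_pow_pred_sub_one_sub_pow_add hq2 hs,
      ZMod.natCast_self]
  refine card_image_mul_pow_mod (by omega) fun e he hem => ?_
  rw [hneg, neg_mul, Ne, neg_inj]
  exact natCast_pow_pred_add_pow_mul_pow_ne hq2 hs hms he hem

/-- the q-cyclotomic coset of δ_i modulo n = q^m - 1 has exactly m
elements. -/
theorem stmt_1 (q m i : ℕ) (hq : IsPrimePow q) (hm : 2 ≤ m)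
    (hi3 : 3 ≤ i) (hi : i ≤ m - ((m - 1) / 2 + (m - 3) / 3)) :
    (Finset.image
      (fun j : ℕ =>
        ((q - 1) * q ^ (m - 1) - 1 - q ^ ((m - 1) / 2 + i - 2)) * q ^ j % (q ^ m - 1))
      (Finset.range m)).card = m :=
  stmt_1_general q m i hq hi3 hi
end

section
/- Let q ≥ 2 be a prime power, m ≥ 2, n = q^m - 1, 2 ≤ i ≤ m - (⌊(m-1)/2⌋ + ⌊(m-3)/3⌋) - 1, and set h = ⌊(m-1)/2⌋ + i - 2 and δ_i = (q-1)q^{m-1} - 1 - q^h. Then for every integer j with 1 ≤ j ≤ (q-1)q^h - 1, the integer δ_i - j is NOT a q-cyclotomic coset leader modulo n; that is, there exists 1 ≤ l ≤ m-1 with ((δ_i - j)·q^l mod n) < δ_i - j. -/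
lemma rot_aux_stmt2 (q a l y : ℕ) (hq : 2 ≤ q) (hl : 1 ≤ l)
    (hy : y < q ^ (a + l) - 1) :
    y * q ^ l % (q ^ (a + l) - 1) = y % q ^ a * q ^ l + y / q ^ a := by
  have hqa : 0 < q ^ a := pow_pos (by omega) a
  have hql2 : 2 ≤ q ^ l := by
    calc (2:ℕ) = 2 ^ 1 := rfl
    _ ≤ q ^ 1 := by simpa using hq
    _ ≤ q ^ l := Nat.pow_le_pow_right (by omega) hl
  have hal : q ^ a * q ^ l = q ^ (a + l) := (pow_add q a l).symm
  have hone : 1 ≤ q ^ (a + l) := Nat.one_le_pow _ _ (by omega)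
  have hylt : y + 1 < q ^ (a + l) := lt_tsub_iff_right.mp hy
  have hdm : q ^ a * (y / q ^ a) + y % q ^ a = y := Nat.div_add_mod y (q ^ a)
  set A := y / q ^ a with hA
  set B := y % q ^ a with hB
  have hBlt : B < q ^ a := Nat.mod_lt y hqa
  have hA1 : A + 1 ≤ q ^ l := by
    by_contra hcon
    push_neg at hcon
    have h2 : q ^ a * q ^ l ≤ q ^ a * A := Nat.mul_le_mul_left _ (by omega)
    linarith
  have hsum : A + B * q ^ l + 1 < q ^ (a + l) := by
    rcases le_or_gt (B + 2) (q ^ a) with hB2 | hB2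
    · have k1 : (B + 2) * q ^ l ≤ q ^ a * q ^ l := Nat.mul_le_mul_right _ hB2
      have k2 : (B + 2) * q ^ l = B * q ^ l + 2 * q ^ l := by ring
      linarith
    · have hB1 : B + 1 = q ^ a := by omega
      have k4' : q ^ a * (A + 1) = q ^ a * A + q ^ a := by ring
      have k4 : q ^ a * (A + 1) < q ^ a * q ^ l := by
        rw [hal]; linarith
      have k5 : A + 1 < q ^ l := lt_of_mul_lt_mul_left k4 (Nat.zero_le _)
      have k6 : (B + 1) * q ^ l = q ^ a * q ^ l := by rw [hB1]
      have k7 : (B + 1) * q ^ l = B * q ^ l + q ^ l := by ring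
      linarith
  have h1 : A * (q ^ (a + l) - 1) + A = A * q ^ (a + l) := by
    have h2 : q ^ (a + l) - 1 + 1 = q ^ (a + l) := Nat.sub_add_cancel hone
    calc A * (q ^ (a + l) - 1) + A = A * ((q ^ (a + l) - 1) + 1) := by ring
    _ = A * q ^ (a + l) := by rw [h2]
  have hrw : y * q ^ l = (A + B * q ^ l) + A * (q ^ (a + l) - 1) := by
    calc y * q ^ l = (q ^ a * A + B) * q ^ l := by rw [hdm]
    _ = A * (q ^ a * q ^ l) + B * q ^ l := by ring
    _ = A * q ^ (a + l) + B * q ^ l := by rw [hal]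
    _ = (A + B * q ^ l) + A * (q ^ (a + l) - 1) := by rw [← h1]; ring
  rw [hrw, Nat.add_mul_mod_self_right, Nat.mod_eq_of_lt (lt_tsub_iff_right.mpr hsum)]
  exact Nat.add_comm _ _

lemma main_aux_stmt2 (q h R j : ℕ) (hq : 2 ≤ q) (hh : 1 ≤ h) (hR : 1 ≤ R)
    (hhR : h ≤ 2 * R) (hj1 : 1 ≤ j) (hj2 : j ≤ (q - 1) * q ^ h - 1) :
    ∃ l : ℕ, 1 ≤ l ∧ l ≤ h + R + 1 ∧
      ((q - 1) * q ^ (h + R + 1) - 1 - q ^ h - j) * q ^ l % (q ^ (h + R + 2) - 1)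
        < (q - 1) * q ^ (h + R + 1) - 1 - q ^ h - j := by
  obtain ⟨p, rfl⟩ : ∃ p, q = p + 2 := ⟨q - 2, by omega⟩
  simp only [show p + 2 - 1 = p + 1 from by omega] at hj2 ⊢
  have hph : 1 ≤ (p + 2) ^ h := Nat.one_le_pow _ _ (by omega)
  have hjub : j + 1 ≤ (p + 1) * (p + 2) ^ h := by
    have h0 : 0 < (p + 1) * (p + 2) ^ h := Nat.mul_pos (by omega) (pow_pos (by omega) h)
    have h2 : (p + 1) * (p + 2) ^ h - 1 < (p + 1) * (p + 2) ^ h := Nat.sub_lt h0 Nat.one_pos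
    exact Nat.lt_of_le_of_lt hj2 h2
  set X := (p + 1) * (p + 2) ^ (h + R + 1) - 1 - (p + 2) ^ h - j with hXdef
  have hXle : 1 + (p + 2) ^ h + j ≤ (p + 1) * (p + 2) ^ (h + R + 1) := by
    have e1 : (p + 1) * (p + 2) ^ h + (p + 2) ^ h = (p + 2) ^ (h + 1) := by ring
    have e2 : (p + 2) ^ (h + 1) ≤ (p + 2) ^ (h + R + 1) :=
      Nat.pow_le_pow_right (by omega) (by omega)
    have e3 : (p + 2) ^ (h + R + 1) ≤ (p + 1) * (p + 2) ^ (h + R + 1) := by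
      calc (p + 2) ^ (h + R + 1) = 1 * (p + 2) ^ (h + R + 1) := by ring
      _ ≤ (p + 1) * (p + 2) ^ (h + R + 1) := Nat.mul_le_mul_right _ (by omega)
    linarith
  have hXeq : X + (1 + (p + 2) ^ h + j) = (p + 1) * (p + 2) ^ (h + R + 1) := by
    rw [hXdef, Nat.sub_sub, Nat.sub_sub,
      show 1 + ((p + 2) ^ h + j) = 1 + (p + 2) ^ h + j from (add_assoc 1 _ _).symm]
    exact Nat.sub_add_cancel hXle
  have hXlt : X < (p + 2) ^ (h + R + 2) - 1 := by
    rw [lt_tsub_iff_right]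
    have e4 : (p + 1) * (p + 2) ^ (h + R + 1) + (p + 2) ^ (h + R + 1)
        = (p + 2) ^ (h + R + 2) := by ring
    have e5 : 1 ≤ (p + 2) ^ (h + R + 1) := Nat.one_le_pow _ _ (by omega)
    linarith
  obtain ⟨v, hv1, hv2⟩ : ∃ v, (p + 2) ^ v ≤ j ∧ j < (p + 2) ^ (v + 1) :=
    ⟨Nat.log (p + 2) j, Nat.pow_log_le_self _ (by omega),
      Nat.lt_pow_succ_log_self (by omega) j⟩
  rcases le_or_gt h (v + R) with hcase | hcase
  · -- rotate the digit at position h to the top : l = R + 1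
    refine ⟨R + 1, by omega, by omega, ?_⟩
    obtain ⟨b, hb⟩ := Nat.le.dest hjub
    have hcpos : 1 ≤ (p + 1) * (p + 2) ^ R :=
      Nat.mul_pos (by omega) (pow_pos (by omega) R)
    obtain ⟨c, hc⟩ := Nat.le.dest hcpos
    have e1 : (p + 1) * (p + 2) ^ h + (p + 2) ^ h = (p + 2) ^ (h + 1) := by ring
    have hblt : b < (p + 2) ^ (h + 1) := by linarith
    have key2 : (p + 2) ^ (h + 1) * c + b + (1 + (p + 2) ^ h + j)
        = (p + 1) * (p + 2) ^ (h + R + 1) := by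
      calc (p + 2) ^ (h + 1) * c + b + (1 + (p + 2) ^ h + j)
          = (p + 2) ^ (h + 1) * c + ((j + 1) + b) + (p + 2) ^ h := by ring
        _ = (p + 2) ^ (h + 1) * c + (p + 1) * (p + 2) ^ h + (p + 2) ^ h := by rw [hb]
        _ = (p + 2) ^ (h + 1) * (1 + c) := by ring
        _ = (p + 2) ^ (h + 1) * ((p + 1) * (p + 2) ^ R) := by rw [hc]
        _ = (p + 1) * (p + 2) ^ (h + R + 1) := by ring
    have hsplit : X = (p + 2) ^ (h + 1) * c + b := by linarith [hXeq, key2]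
    have hrot := rot_aux_stmt2 (p + 2) (h + 1) (R + 1) X (by omega) (by omega)
      (by rw [show h + 1 + (R + 1) = h + R + 2 from by omega]; exact hXlt)
    rw [show h + 1 + (R + 1) = h + R + 2 from by omega] at hrot
    rw [hrot, hsplit, Nat.mul_add_mod, Nat.mod_eq_of_lt hblt,
      Nat.mul_add_div (pow_pos (by omega) _), Nat.div_eq_of_lt hblt, add_zero]
    -- goal : b * (p+2)^(R+1) + c < (p+2)^(h+1) * c + b
    obtain ⟨d, hd⟩ := Nat.le.dest hv1
    have f1 : ((j + 1) + b) * (p + 2) ^ (R + 1) = (p + 1) * (p + 2) ^ (h + R + 1) := by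
      rw [hb]; ring
    have f1' : j * (p + 2) ^ (R + 1) + (p + 2) ^ (R + 1) + b * (p + 2) ^ (R + 1)
        = (p + 1) * (p + 2) ^ (h + R + 1) := by rw [← f1]; ring
    have f2 : (p + 1) * (p + 2) ^ R + (p + 2) ^ R = (p + 2) ^ (R + 1) := by ring
    have c2 : (p + 2) ^ v * (p + 2) ^ (R + 1) + d * (p + 2) ^ (R + 1)
        = j * (p + 2) ^ (R + 1) := by rw [← hd]; ring
    have c3 : (p + 2) ^ v * (p + 2) ^ (R + 1) = (p + 2) ^ (v + R + 1) := by ring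
    have c1 : (p + 2) ^ h ≤ (p + 2) ^ (v + R) := Nat.pow_le_pow_right (by omega) (by omega)
    have c4 : 2 * (p + 2) ^ (v + R) ≤ (p + 2) ^ (v + R + 1) := by
      have e6 : (p + 2) ^ (v + R + 1) = (p + 2) * (p + 2) ^ (v + R) := by ring
      have h2 : 2 * (p + 2) ^ (v + R) ≤ (p + 2) * (p + 2) ^ (v + R) :=
        Nat.mul_le_mul_right _ (by omega)
      linarith
    have c5 : (p + 2) ^ (v + 1) ≤ (p + 2) ^ (v + R) :=
      Nat.pow_le_pow_right (by omega) (by omega)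
    have c6 : 2 * (p + 2) ^ v ≤ (p + 2) ^ (v + 1) := by
      have e7 : (p + 2) ^ (v + 1) = (p + 2) * (p + 2) ^ v := by ring
      have h2 : 2 * (p + 2) ^ v ≤ (p + 2) * (p + 2) ^ v :=
        Nat.mul_le_mul_right _ (by omega)
      linarith
    have c7 : d ≤ d * (p + 2) ^ (R + 1) :=
      Nat.le_mul_of_pos_right _ (pow_pos (by omega) _)
    have c8 : 1 ≤ (p + 2) ^ R := Nat.one_le_pow _ _ (by omega)
    have c9 : 1 ≤ (p + 2) ^ v := Nat.one_le_pow _ _ (by omega)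
    linarith [key2, hc, f1', f2, c1, c2, c3, c4, c5, c6, c7, c8, c9, hd]
  · -- rotate the digit at position v to the top : l = e + R + 2  (h = v + 1 + e)
    obtain ⟨e, rfl, he2, he3⟩ : ∃ e, h = v + 1 + e ∧ R ≤ e ∧ v + 1 ≤ R :=
      ⟨h - v - 1, by omega⟩
    refine ⟨e + R + 2, by omega, by omega, ?_⟩
    obtain ⟨b, hb⟩ := Nat.le.dest (show j + 1 ≤ (p + 2) ^ (v + 1) from hv2)
    have hcle : (p + 2) ^ e + 1 ≤ (p + 1) * (p + 2) ^ (e + R + 1) := by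
      have b1 : (p + 2) ^ (e + 1) ≤ (p + 2) ^ (e + R + 1) :=
        Nat.pow_le_pow_right (by omega) (by omega)
      have b2 : (p + 2) ^ (e + 1) = (p + 2) * (p + 2) ^ e := by ring
      have b3 : 2 * (p + 2) ^ e ≤ (p + 2) * (p + 2) ^ e :=
        Nat.mul_le_mul_right _ (by omega)
      have b4 : 1 ≤ (p + 2) ^ e := Nat.one_le_pow _ _ (by omega)
      have b5 : (p + 2) ^ (e + R + 1) ≤ (p + 1) * (p + 2) ^ (e + R + 1) := by
        calc (p + 2) ^ (e + R + 1) = 1 * (p + 2) ^ (e + R + 1) := by ring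
        _ ≤ (p + 1) * (p + 2) ^ (e + R + 1) := Nat.mul_le_mul_right _ (by omega)
      linarith
    obtain ⟨c, hc⟩ := Nat.le.dest hcle
    have hblt : b < (p + 2) ^ (v + 1) := by linarith
    have key2 : (p + 2) ^ (v + 1) * c + b + (1 + (p + 2) ^ (v + 1 + e) + j)
        = (p + 1) * (p + 2) ^ (v + 1 + e + R + 1) := by
      calc (p + 2) ^ (v + 1) * c + b + (1 + (p + 2) ^ (v + 1 + e) + j)
          = (p + 2) ^ (v + 1) * c + ((j + 1) + b) + (p + 2) ^ (v + 1 + e) := by ring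
        _ = (p + 2) ^ (v + 1) * c + (p + 2) ^ (v + 1) + (p + 2) ^ (v + 1 + e) := by rw [hb]
        _ = (p + 2) ^ (v + 1) * (((p + 2) ^ e + 1) + c) := by ring
        _ = (p + 2) ^ (v + 1) * ((p + 1) * (p + 2) ^ (e + R + 1)) := by rw [hc]
        _ = (p + 1) * (p + 2) ^ (v + 1 + e + R + 1) := by ring
    have hsplit : X = (p + 2) ^ (v + 1) * c + b := by linarith [hXeq, key2]
    have hrot := rot_aux_stmt2 (p + 2) (v + 1) (e + R + 2) X (by omega) (by omega)
      (by rw [show v + 1 + (e + R + 2) = v + 1 + e + R + 2 from by omega]; exact hXlt)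
    rw [show v + 1 + (e + R + 2) = v + 1 + e + R + 2 from by omega] at hrot
    rw [hrot, hsplit, Nat.mul_add_mod, Nat.mod_eq_of_lt hblt,
      Nat.mul_add_div (pow_pos (by omega) _), Nat.div_eq_of_lt hblt, add_zero]
    -- goal : b * (p+2)^(e+R+2) + c < (p+2)^(v+1) * c + b
    have g1 : ((j + 1) + b) * (p + 2) ^ (e + R + 2) = (p + 2) ^ (v + 1 + e + R + 2) := by
      rw [hb]; ring
    have g1' : j * (p + 2) ^ (e + R + 2) + (p + 2) ^ (e + R + 2) + b * (p + 2) ^ (e + R + 2)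
        = (p + 2) ^ (v + 1 + e + R + 2) := by rw [← g1]; ring
    have g2 : (p + 1) * (p + 2) ^ (v + 1 + e + R + 1) + (p + 2) ^ (v + 1 + e + R + 1)
        = (p + 2) ^ (v + 1 + e + R + 2) := by ring
    have g3 : (p + 2) ^ v * (p + 2) ^ (e + R + 2) = (p + 2) ^ (v + 1 + e + R + 1) := by ring
    have g4 : (p + 2) ^ v * (p + 2) ^ (e + R + 2) ≤ j * (p + 2) ^ (e + R + 2) :=
      Nat.mul_le_mul_right _ hv1
    have g6 : (p + 2) ^ (v + 1) ≤ (p + 2) ^ (e + R) :=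
      Nat.pow_le_pow_right (by omega) (by omega)
    have g8 : (p + 2) ^ (v + 1 + e) ≤ (p + 2) ^ (e + R) :=
      Nat.pow_le_pow_right (by omega) (by omega)
    have g9 : 2 * (p + 2) ^ (e + R) ≤ (p + 2) ^ (e + R + 1) := by
      have e1 : (p + 2) ^ (e + R + 1) = (p + 2) * (p + 2) ^ (e + R) := by ring
      have e2 : 2 * (p + 2) ^ (e + R) ≤ (p + 2) * (p + 2) ^ (e + R) :=
        Nat.mul_le_mul_right _ (by omega)
      linarith
    have g10 : (p + 1) * (p + 2) ^ (e + R + 1) + (p + 2) ^ (e + R + 1)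
        = (p + 2) ^ (e + R + 2) := by ring
    have g11 : 1 ≤ (p + 2) ^ e := Nat.one_le_pow _ _ (by omega)
    linarith [key2, hc, g1', g2, g3, g4, hv2, g6, g8, g9, g10, g11]

/-- for 1 ≤ j ≤ (q-1)q^h - 1, the integer δ_i - j is not a
q-cyclotomic coset leader modulo n = q^m - 1. -/
theorem stmt_2 (q m i : ℕ) (hq : IsPrimePow q) (hm : 2 ≤ m)
    (hi2 : 2 ≤ i) (hi : i ≤ m - ((m - 1) / 2 + (m - 3) / 3) - 1) :
    ∀ j : ℕ, 1 ≤ j → j ≤ (q - 1) * q ^ ((m - 1) / 2 + i - 2) - 1 →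
      ∃ l : ℕ, 1 ≤ l ∧ l ≤ m - 1 ∧
        ((q - 1) * q ^ (m - 1) - 1 - q ^ ((m - 1) / 2 + i - 2) - j) * q ^ l % (q ^ m - 1)
          < (q - 1) * q ^ (m - 1) - 1 - q ^ ((m - 1) / 2 + i - 2) - j := by
  intro j hj1 hj2
  have hq2 : 2 ≤ q := hq.two_le
  set h := (m - 1) / 2 + i - 2 with hhdef
  obtain ⟨R, hm2, hh1, hhR, hR1⟩ :
      ∃ R, m = h + R + 2 ∧ 1 ≤ h ∧ h ≤ 2 * R ∧ 1 ≤ R :=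
    ⟨m - h - 2, by omega⟩
  rw [show m - 1 = h + R + 1 from by omega, show m = h + R + 2 from hm2]
  exact main_aux_stmt2 q h R j hq2 hh1 hR1 hhR hj1 hj2
end

section
/- Let q ≥ 2, m = 2s with s ≥ 2, n = (q^{2s} - 1)/(q+1), and suppose h is a positive integer divisible by q+1 with h < q^{2s} - 1. Then h is a q-cyclotomic coset leader modulo q^{2s} - 1 if and only if h/(q+1) is a q-cyclotomic coset leader modulo n. -/
/-- h is a coset leader modulo q^{2s}-1 iff h/(q+1) is a coset
leader modulo n = (q^{2s}-1)/(q+1). -/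
theorem stmt_5 (q s h : ℕ) (hq : 2 ≤ q) (hs : 2 ≤ s)
    (hpos : 0 < h) (hdvd : (q + 1) ∣ h) (hlt : h < q ^ (2 * s) - 1) :
    (∀ j : ℕ, h ≤ h * q ^ j % (q ^ (2 * s) - 1)) ↔
      (∀ j : ℕ, h / (q + 1) ≤ (h / (q + 1)) * q ^ j % ((q ^ (2 * s) - 1) / (q + 1))) := by
  have hNdvd : (q + 1) ∣ q ^ (2 * s) - 1 := by
    have h1 : (q + 1) ∣ q ^ 2 - 1 ^ 2 := by
      have hsq := Nat.sq_sub_sq q 1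
      simp only [pow_two] at hsq ⊢
      rw [hsq]
      exact Dvd.intro _ rfl
    have h2 : q ^ 2 - 1 ^ 2 ∣ (q ^ 2) ^ s - (1 ^ 2) ^ s :=
      Nat.sub_dvd_pow_sub_pow _ _ s
    have : (q ^ 2) ^ s - (1 ^ 2) ^ s = q ^ (2 * s) - 1 := by
      rw [← pow_mul, one_pow, one_pow]
    exact this ▸ h1.trans h2
  obtain ⟨h', rfl⟩ := hdvd
  obtain ⟨n, hn⟩ := hNdvd
  have hq1 : 0 < q + 1 := by omega
  rw [hn]
  rw [Nat.mul_div_cancel_left _ hq1, Nat.mul_div_cancel_left _ hq1]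
  constructor <;> intro H j <;> have := H j
  · rw [mul_assoc, Nat.mul_mod_mul_left] at this
    exact Nat.le_of_mul_le_mul_left this hq1
  · rw [mul_assoc, Nat.mul_mod_mul_left]
    exact Nat.mul_le_mul_left _ this
end

section
/- Let q be a prime power, s odd with s > 4, m = 2s, n = (q^m - 1)/(q+1), and δ = ((q-1)q^{2s-1} - q^{s+1} - 1)/(q+1). Then the q-cyclotomic coset of δ modulo n has exactly 2s elements; equivalently, the least l ≥ 1 with δ·q^l ≡ δ (mod n) is l = 2s. -/
/-- the q-cyclotomic coset of δ = ((q-1)q^{2s-1}-q^{s+1}-1)/(q+1)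
modulo n = (q^{2s}-1)/(q+1) has exactly 2s elements: the least l ≥ 1 with
n ∣ δ(q^l - 1) is l = 2s. -/
theorem stmt_6 (q s : ℕ) (hq : IsPrimePow q) (hs : Odd s) (hs4 : 4 < s) :
    IsLeast
      {l : ℕ | 1 ≤ l ∧
        (q ^ (2 * s) - 1) / (q + 1) ∣
          (((q - 1) * q ^ (2 * s - 1) - q ^ (s + 1) - 1) / (q + 1)) * (q ^ l - 1)}
      (2 * s) := by
  have h2 : 2 ≤ q := hq.two_le
  obtain ⟨t, rfl⟩ : ∃ t, s = t + 5 := ⟨s - 5, by omega⟩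
  have hodd3 : Odd (t + 3) := by
    obtain ⟨k, hk⟩ := hs; exact ⟨k - 1, by omega⟩
  simp only [show 2 * (t + 5) - 1 = 2 * t + 9 from by omega]
  simp only [show 2 * (t + 5) = 2 * t + 10 from by omega,
    show t + 5 + 1 = t + 6 from by omega]
  -- basic power facts
  have hp1 : ∀ k : ℕ, 1 ≤ q ^ k := fun k => Nat.one_le_pow _ _ (by omega)
  have hmono : ∀ {i j : ℕ}, i ≤ j → q ^ i ≤ q ^ j := fun h =>
    Nat.pow_le_pow_right (by omega) h
  have hdouble : ∀ k : ℕ, 2 * q ^ k ≤ q ^ (k + 1) := fun k => by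
    calc 2 * q ^ k ≤ q * q ^ k := Nat.mul_le_mul_right _ h2
      _ = q ^ (k + 1) := by ring
  -- divisibility of q+1 into q^(2t+10)-1
  have hdvd1 : q + 1 ∣ q ^ (2 * t + 10) - 1 := by
    have h1 : q + 1 ∣ q ^ 2 - 1 :=
      ⟨q - 1, by zify [show 1 ≤ q from by omega, show 1 ≤ q ^ 2 from hp1 2]; ring⟩
    have h2' : q ^ 2 - 1 ∣ (q ^ 2) ^ (t + 5) - 1 ^ (t + 5) := Nat.sub_dvd_pow_sub_pow _ _ _
    rw [one_pow, ← pow_mul] at h2'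
    exact h1.trans (by simpa [show 2 * (t + 5) = 2 * t + 10 from by omega] using h2')
  have hdvda : q + 1 ∣ q ^ (t + 3) + 1 := by
    simpa using hodd3.nat_add_dvd_pow_add_pow q 1
  set n := (q ^ (2 * t + 10) - 1) / (q + 1) with hn_def
  set δ := (((q - 1) * q ^ (2 * t + 9) - q ^ (t + 6) - 1)) / (q + 1) with hδ_def
  set a := (q ^ (t + 3) + 1) / (q + 1) with ha_def
  have hn : (q + 1) * n = q ^ (2 * t + 10) - 1 := Nat.mul_div_cancel' hdvd1
  have ha : (q + 1) * a = q ^ (t + 3) + 1 := Nat.mul_div_cancel' hdvda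
  have ha_pos : 0 < a := by
    rcases Nat.eq_zero_or_pos a with h | h
    · rw [h, mul_zero] at ha; simp at ha
    · exact h
  have h210 : 2 ≤ q ^ (2 * t + 10) :=
    le_trans h2 (by simpa using hmono (show 1 ≤ 2 * t + 10 from by omega))
  have hpos10 : 0 < q ^ (2 * t + 10) - 1 := Nat.sub_pos_of_lt h210
  have hn_pos : 0 < n := by
    rcases Nat.eq_zero_or_pos n with h | h
    · rw [h, mul_zero] at hn; exact absurd hn.symm hpos10.ne'
    · exact h
  -- key inequality q^(t+6) + 1 ≤ q^(2t+9)
  have e1 : q ^ (t + 6) + 1 ≤ q ^ (2 * t + 9) := by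
    calc q ^ (t + 6) + 1 ≤ 2 * q ^ (t + 6) := by linarith [hp1 (t + 6)]
      _ ≤ q ^ (t + 7) := hdouble _
      _ ≤ q ^ (2 * t + 9) := hmono (by omega)
  have e2 : 2 * q ^ (2 * t + 9) ≤ q ^ (2 * t + 10) := by
    have h := hdouble (2 * t + 9); rwa [show 2 * t + 9 + 1 = 2 * t + 10 from by omega] at h
  -- inequality: q^(t+6) * a ≤ n
  have key1 : (q + 1) * (q ^ (t + 6) * a) = q ^ (2 * t + 9) + q ^ (t + 6) := by
    have h' : (q + 1) * (q ^ (t + 6) * a) = q ^ (t + 6) * ((q + 1) * a) := by ring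
    rw [h', ha]; ring
  have i2 : q ^ (t + 6) * a ≤ n := by
    have hmid : q ^ (2 * t + 9) + q ^ (t + 6) ≤ q ^ (2 * t + 10) - 1 := by
      apply Nat.le_sub_of_add_le; linarith
    have h' : (q + 1) * (q ^ (t + 6) * a) ≤ (q + 1) * n := by rw [key1, hn]; exact hmid
    exact Nat.le_of_mul_le_mul_left h' (by omega)
  -- the crucial identity: δ = n - q^(t+6) * a
  have i1a : q ^ (t + 6) ≤ (q - 1) * q ^ (2 * t + 9) := by
    calc q ^ (t + 6) ≤ q ^ (2 * t + 9) := hmono (by omega)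
      _ ≤ (q - 1) * q ^ (2 * t + 9) := Nat.le_mul_of_pos_left _ (by omega)
  have i1b : 1 ≤ (q - 1) * q ^ (2 * t + 9) - q ^ (t + 6) := by
    apply Nat.le_sub_of_add_le
    have h' : q ^ (2 * t + 9) ≤ (q - 1) * q ^ (2 * t + 9) := Nat.le_mul_of_pos_left _ (by omega)
    linarith
  have hnum : (q - 1) * q ^ (2 * t + 9) - q ^ (t + 6) - 1 = (q + 1) * (n - q ^ (t + 6) * a) := by
    have hnz : ((q : ℤ) + 1) * n = (q : ℤ) ^ (2 * t + 10) - 1 := by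
      have h' := hn; zify [hp1 (2 * t + 10)] at h'; linarith [h']
    have haz : ((q : ℤ) + 1) * a = (q : ℤ) ^ (t + 3) + 1 := by exact_mod_cast ha
    zify [i1a, i1b, i2, show 1 ≤ q from by omega]
    linear_combination (q : ℤ) ^ (t + 6) * haz - hnz
  have hδ_eq : δ = n - q ^ (t + 6) * a := by
    rw [hδ_def, hnum, Nat.mul_div_cancel_left _ (by omega : 0 < q + 1)]
  constructor
  · simp only [Set.mem_setOf_eq]
    exact ⟨by omega, ⟨δ * (q + 1), by rw [← hn]; ring⟩⟩
  · rintro l hl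
    simp only [Set.mem_setOf_eq] at hl
    obtain ⟨hl1, hl2⟩ := hl
    set X := q ^ l - 1 with hX_def
    have hbX : n ∣ q ^ (t + 6) * a * X := by
      have f1 : δ * X = n * X - q ^ (t + 6) * a * X := by rw [hδ_eq, Nat.sub_mul]
      have f2 : q ^ (t + 6) * a * X ≤ n * X := Nat.mul_le_mul_right _ i2
      have f3 : q ^ (t + 6) * a * X = n * X - δ * X := by rw [f1, Nat.sub_sub_self f2]
      rw [f3]; exact Nat.dvd_sub (dvd_mul_right n X) hl2
    -- n is coprime to q
    have hcop : Nat.Coprime n q := by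
      have hg : Nat.gcd (q ^ (2 * t + 10) - 1) q = 1 := by
        have d1 : Nat.gcd (q ^ (2 * t + 10) - 1) q ∣ q ^ (2 * t + 10) :=
          (Nat.gcd_dvd_right _ _).trans (dvd_pow_self q (by omega))
        have d2 : Nat.gcd (q ^ (2 * t + 10) - 1) q ∣ q ^ (2 * t + 10) - 1 :=
          Nat.gcd_dvd_left _ _
        have d3 : Nat.gcd (q ^ (2 * t + 10) - 1) q ∣ 1 := by
          have h' := Nat.dvd_sub d1 d2
          rwa [Nat.sub_sub_self (hp1 _)] at h'
        exact Nat.dvd_one.mp d3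
      have hnd : n ∣ q ^ (2 * t + 10) - 1 := ⟨q + 1, by rw [← hn]; ring⟩
      exact Nat.Coprime.coprime_dvd_left hnd hg
    have haX : n ∣ a * X := by
      have h' : n ∣ q ^ (t + 6) * (a * X) := by rwa [← mul_assoc]
      exact (Nat.Coprime.pow_right _ hcop).dvd_of_dvd_mul_left h'
    -- split by gcd with a
    set g := Nat.gcd n a with hg_def
    have hg0 : 0 < g := Nat.gcd_pos_of_pos_left _ hn_pos
    set m' := n / g with hm'_def
    have hgm : g * m' = n := Nat.mul_div_cancel' (Nat.gcd_dvd_left _ _)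
    have hm'0 : 0 < m' := Nat.div_pos (Nat.le_of_dvd hn_pos (Nat.gcd_dvd_left _ _)) hg0
    haveI : NeZero m' := ⟨hm'0.ne'⟩
    set a' := a / g with ha'_def
    have hga : g * a' = a := Nat.mul_div_cancel' (Nat.gcd_dvd_right _ _)
    have hcop' : Nat.Coprime m' a' := Nat.coprime_div_gcd_div_gcd hg0
    have hm'X : m' ∣ X := by
      have h1 : g * m' ∣ g * (a' * X) := by
        rw [hgm, show g * (a' * X) = (g * a') * X from by ring, hga]; exact haX
      have h2' : m' ∣ a' * X := (mul_dvd_mul_iff_left (by omega : g ≠ 0)).mp h1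
      exact hcop'.dvd_of_dvd_mul_left h2'
    have hm'n : m' ∣ q ^ (2 * t + 10) - 1 := by
      have h' : m' ∣ n := ⟨g, by rw [← hgm]; ring⟩
      exact h'.trans ⟨q + 1, by rw [← hn]; ring⟩
    -- pass to ZMod m'
    have hql : (q : ZMod m') ^ l = 1 := by
      have h0 : ((q ^ l - 1 : ℕ) : ZMod m') = 0 :=
        (ZMod.natCast_eq_zero_iff _ _).mpr hm'X
      rw [Nat.cast_sub (hp1 l)] at h0
      push_cast at h0
      linear_combination h0
    have hq2s : (q : ZMod m') ^ (2 * t + 10) = 1 := by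
      have h0 : ((q ^ (2 * t + 10) - 1 : ℕ) : ZMod m') = 0 :=
        (ZMod.natCast_eq_zero_iff _ _).mpr hm'n
      rw [Nat.cast_sub (hp1 _)] at h0
      push_cast at h0
      linear_combination h0
    set d := Nat.gcd l (2 * t + 10) with hd_def
    have hd_pos : 0 < d := Nat.gcd_pos_of_pos_left _ (by omega)
    have hqd : (q : ZMod m') ^ d = 1 := by
      have o1 : orderOf (q : ZMod m') ∣ l := orderOf_dvd_of_pow_eq_one hql
      have o2 : orderOf (q : ZMod m') ∣ 2 * t + 10 := orderOf_dvd_of_pow_eq_one hq2s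
      exact orderOf_dvd_iff_pow_eq_one.mp (Nat.dvd_gcd o1 o2)
    have hm'd : m' ∣ q ^ d - 1 := by
      apply (ZMod.natCast_eq_zero_iff _ _).mp
      rw [Nat.cast_sub (hp1 d)]
      push_cast
      linear_combination hqd
    -- show d = 2t+10
    have hd_dvd : d ∣ 2 * t + 10 := Nat.gcd_dvd_right _ _
    by_cases hcase : d = 2 * t + 10
    · have h' : 2 * t + 10 ∣ l := hcase ▸ Nat.gcd_dvd_left l (2 * t + 10)
      exact Nat.le_of_dvd (by omega) h'
    · exfalso
      -- d is a proper divisor, hence d ≤ t + 5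
      obtain ⟨k, hk⟩ := hd_dvd
      have hdle : d ≤ t + 5 := by
        rcases Nat.lt_or_ge k 2 with hk2 | hk2
        · interval_cases k <;> omega
        · have h22 : d * 2 ≤ d * k := Nat.mul_le_mul_left _ hk2
          rw [← hk] at h22; omega
      have hqd_pos : 0 < q ^ d - 1 :=
        Nat.sub_pos_of_lt (lt_of_lt_of_le h2 (by simpa using hmono hd_pos))
      have hm'le : m' ≤ q ^ (t + 5) - 1 :=
        (Nat.le_of_dvd hqd_pos hm'd).trans (Nat.sub_le_sub_right (hmono hdle) 1)
      -- a * (q^(t+5)-1) < n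
      have hlt : a * (q ^ (t + 5) - 1) < n := by
        have b1 : q ^ (t + 3) * q ^ (t + 5) = q ^ (2 * t + 8) := by
          rw [← pow_add]; ring_nf
        have b2 : 2 * q ^ (2 * t + 8) ≤ q ^ (2 * t + 9) := by
          have h' := hdouble (2 * t + 8)
          rwa [show 2 * t + 8 + 1 = 2 * t + 9 from by omega] at h'
        have b4 : q ^ (t + 5) ≤ q ^ (2 * t + 8) := hmono (by omega)
        have hmid : (q ^ (t + 3) + 1) * (q ^ (t + 5) - 1) < q ^ (2 * t + 10) - 1 := by
          have s1 : (q ^ (t + 3) + 1) * (q ^ (t + 5) - 1) < (q ^ (t + 3) + 1) * q ^ (t + 5) := by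
            have h5 : q ^ (t + 5) - 1 < q ^ (t + 5) := Nat.sub_lt (hp1 _) one_pos
            exact mul_lt_mul_of_pos_left h5 (by positivity)
          have s2 : (q ^ (t + 3) + 1) * q ^ (t + 5) = q ^ (2 * t + 8) + q ^ (t + 5) := by
            rw [add_mul, one_mul, b1]
          have s4 : q ^ (2 * t + 9) ≤ q ^ (2 * t + 10) - 1 :=
            Nat.le_sub_of_add_le (by linarith [hp1 (2 * t + 9), e2])
          calc (q ^ (t + 3) + 1) * (q ^ (t + 5) - 1)
              < (q ^ (t + 3) + 1) * q ^ (t + 5) := s1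
            _ = q ^ (2 * t + 8) + q ^ (t + 5) := s2
            _ ≤ 2 * q ^ (2 * t + 8) := by linarith
            _ ≤ q ^ (2 * t + 9) := b2
            _ ≤ q ^ (2 * t + 10) - 1 := s4
        have e : (q + 1) * (a * (q ^ (t + 5) - 1)) = (q ^ (t + 3) + 1) * (q ^ (t + 5) - 1) := by
          rw [← mul_assoc, ha]
        have h' : (q + 1) * (a * (q ^ (t + 5) - 1)) < (q + 1) * n := by
          rw [e, hn]; exact hmid
        exact Nat.lt_of_mul_lt_mul_left h'
      have hga_le : g ≤ a := Nat.le_of_dvd ha_pos (Nat.gcd_dvd_right _ _)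
      have hfin : n ≤ a * (q ^ (t + 5) - 1) := by
        calc n = g * m' := hgm.symm
          _ ≤ a * m' := Nat.mul_le_mul_right _ hga_le
          _ ≤ a * (q ^ (t + 5) - 1) := Nat.mul_le_mul_left _ hm'le
      exact lt_irrefl n (lt_of_le_of_lt hfin hlt)
end

section
/- Let q be a prime power, s odd with s > 4, m = 2s, and n = (q^{2s}-1)/(q+1). Then δ₂ = ((q-1)q^{2s-1} - q^{s+1} - 1)/(q+1) is the second largest q-cyclotomic coset leader modulo n: δ₂ is a coset leader, δ₁ = ((q-1)q^{2s-1} - q^{s-1} - 1)/(q+1) is a coset leader with δ₂ < δ₁, and no integer a with δ₂ < a < δ₁ is a coset leader modulo n. -/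
namespace Stmt7Aux

lemma rot_core (P Q M a b : ℕ) (hP : 0 < P) (hQ : 0 < Q) (hM : P * Q = M)
    (hb : b < P) (hT : a * P + b < M - 1) :
    (a * P + b) * Q % (M - 1) = b * Q + a := by
  have hM1 : 1 ≤ M := by nlinarith
  have ha : a < Q := by
    by_contra hcon
    push_neg at hcon
    have h1 : Q * P ≤ a * P := Nat.mul_le_mul_right _ hcon
    have h2 : Q * P = M := by rw [mul_comm]; exact hM
    omega
  have hPQ1 : (P - 1) * Q = M - Q := by
    rw [Nat.sub_mul, one_mul, hM]
  have hlt : b * Q + a < M - 1 := by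
    rcases Nat.lt_or_ge b (P - 1) with hb2 | hb2
    · have h3 : (b + 1) * Q ≤ (P - 1) * Q := Nat.mul_le_mul_right _ (by omega)
      have h4 : (b + 1) * Q = b * Q + Q := by ring
      omega
    · have hbe : b = P - 1 := by omega
      have h4 : b * Q = M - Q := by rw [hbe]; exact hPQ1
      have hQM : Q ≤ M := by nlinarith
      have haa : a < Q - 1 := by
        by_contra hcon
        push_neg at hcon
        have hae : a = Q - 1 := by omega
        have h6 : a * P = M - P := by
          rw [hae, Nat.sub_mul, one_mul, mul_comm, hM]
        have hPM : P ≤ M := by nlinarith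
        omega
      omega
  have key : (a * P + b) * Q = (M - 1) * a + (b * Q + a) := by
    have h1 : (M - 1) * a + a = M * a := by
      have hh : M - 1 + 1 = M := by omega
      calc (M - 1) * a + a = ((M - 1) + 1) * a := by ring
        _ = M * a := by rw [hh]
    have h3 : a * P * Q = M * a := by rw [mul_assoc, hM]; ring
    have h2 : (a * P + b) * Q = a * P * Q + b * Q := by ring
    omega
  rw [key, Nat.mul_add_mod, Nat.mod_eq_of_lt hlt]

/-- q^i * 2 ≤ q^k for i < k -/
lemma two_pow_le (q i k : ℕ) (hq : 2 ≤ q) (hik : i < k) : 2 * q ^ i ≤ q ^ k := by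
  have h1 : q ^ i * q = q ^ (i + 1) := by rw [← pow_succ]
  have h2 : q ^ (i + 1) ≤ q ^ k := Nat.pow_le_pow_right (by omega) (by omega)
  have h3 : q ^ i * 2 ≤ q ^ i * q := Nat.mul_le_mul_left _ hq
  omega

/-- minimality of T₂ = q^{2s}-1-q^{2s-1}-q^{s+1} among cyclic shifts -/
lemma min_lem2 (q s j : ℕ) (hq : 2 ≤ q) (hs : 5 ≤ s) (hj : j < 2 * s) :
    q ^ (2 * s) - 1 - q ^ (2 * s - 1) - q ^ (s + 1) ≤
      (q ^ (2 * s) - 1 - q ^ (2 * s - 1) - q ^ (s + 1)) * q ^ j % (q ^ (2 * s) - 1) := by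
  have hq0 : 0 < q := by omega
  set T := q ^ (2 * s) - 1 - q ^ (2 * s - 1) - q ^ (s + 1) with hT
  -- power facts
  have pC1 : q ^ (s + 1) < q ^ (2 * s - 1) :=
    Nat.pow_lt_pow_right (by omega) (by omega)
  have pBpos : 0 < q ^ (2 * s - 1) := pow_pos hq0 _
  have pCpos : 0 < q ^ (s + 1) := pow_pos hq0 _
  have pBA : q ^ (2 * s - 1) < q ^ (2 * s) :=
    Nat.pow_lt_pow_right (by omega) (by omega)
  have pBA2 : 2 * q ^ (2 * s - 1) ≤ q ^ (2 * s) := two_pow_le q _ _ hq (by omega)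
  have pC2 : 2 * q ^ (s + 1) ≤ q ^ (2 * s - 1) := two_pow_le q _ _ hq (by omega)
  have hTN : T < q ^ (2 * s) - 1 := by rw [hT]; omega
  rcases Nat.eq_zero_or_pos j with rfl | hj1
  · simp only [pow_zero, mul_one]
    rw [Nat.mod_eq_of_lt hTN]
  rcases Nat.lt_or_ge j (s - 1) with hcase | hcase
  · -- case a : 1 ≤ j ≤ s - 2, d = 2s - j ≥ s + 2
    set d := 2 * s - j with hd
    have g1 : q ^ d * q ^ j = q ^ (2 * s) := by rw [← pow_add]; congr 1; omega
    have g2 : q ^ (j - 1) * q ^ d = q ^ (2 * s - 1) := by rw [← pow_add]; congr 1; omega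
    have g3 : q ^ j * q ^ d = q ^ (2 * s) := by rw [← pow_add]; congr 1; omega
    have g4 : q ^ (s + 1) * q ^ j = q ^ (s + 1 + j) := by rw [← pow_add]
    have g5 : q ^ (s + 1 + j) ≤ q ^ (2 * s - 1) :=
      Nat.pow_le_pow_right (by omega) (by omega)
    have g6 : q ^ (j - 1) ≤ q ^ (s + 1) :=
      Nat.pow_le_pow_right (by omega) (by omega)
    have g7 : q ^ (j - 1) < q ^ j := Nat.pow_lt_pow_right (by omega) (by omega)
    have g8 : q ^ (s + 1) < q ^ d := Nat.pow_lt_pow_right (by omega) (by omega)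
    have g9 : q ^ d ≤ q ^ (2 * s - 1) := Nat.pow_le_pow_right (by omega) (by omega)
    have gj : 0 < q ^ j := pow_pos hq0 _
    have gd : 0 < q ^ d := pow_pos hq0 _
    set a := q ^ j - q ^ (j - 1) - 1 with ha
    set b := q ^ d - q ^ (s + 1) - 1 with hb
    have e1 : a * q ^ d = q ^ (2 * s) - q ^ (2 * s - 1) - q ^ d := by
      rw [ha, Nat.sub_mul, Nat.sub_mul, one_mul, g3, g2]
    have key : a * q ^ d + b = T := by rw [e1, hb, hT]; omega
    have hrot : (a * q ^ d + b) * q ^ j % (q ^ (2 * s) - 1) = b * q ^ j + a :=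
      rot_core (q ^ d) (q ^ j) (q ^ (2 * s)) a b gd gj g1
        (by rw [hb]; omega) (by rw [key]; exact hTN)
    rw [← key, hrot]
    have e2 : b * q ^ j = q ^ (2 * s) - q ^ (s + 1 + j) - q ^ j := by
      rw [hb, Nat.sub_mul, Nat.sub_mul, one_mul, g1, g4]
    omega
  · -- case c : s - 1 ≤ j ≤ 2s - 1, d = 2s - j ≤ s + 1
    set d := 2 * s - j with hd
    have g1 : q ^ d * q ^ j = q ^ (2 * s) := by rw [← pow_add]; congr 1; omega
    have g2 : q ^ (j - 1) * q ^ d = q ^ (2 * s - 1) := by rw [← pow_add]; congr 1; omega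
    have g3 : q ^ j * q ^ d = q ^ (2 * s) := by rw [← pow_add]; congr 1; omega
    have g4 : q ^ (j + 1 - s) * q ^ d = q ^ (s + 1) := by rw [← pow_add]; congr 1; omega
    have g5 : q ^ (j - 1) ≤ q ^ (2 * s - 2) := Nat.pow_le_pow_right (by omega) (by omega)
    have g8 : 2 * q ^ (2 * s - 2) ≤ q ^ (2 * s - 1) := two_pow_le q _ _ hq (by omega)
    have gd : 0 < q ^ d := pow_pos hq0 _
    have gj : 0 < q ^ j := pow_pos hq0 _
    have hds : q ^ d ≤ q ^ (s + 1) := Nat.pow_le_pow_right (by omega) (by omega)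
    have g11 : q ^ (j - 1) < q ^ j := Nat.pow_lt_pow_right (by omega) (by omega)
    have g12 : q ^ (j + 1 - s) ≤ q ^ (j - 1) := Nat.pow_le_pow_right (by omega) (by omega)
    have g13 : q ^ (j + 1 - s) ≤ q ^ s := Nat.pow_le_pow_right (by omega) (by omega)
    have g14 : 2 * q ^ s ≤ q ^ (s + 1) := two_pow_le q _ _ hq (by omega)
    set a := q ^ j - q ^ (j - 1) - q ^ (j + 1 - s) - 1 with ha
    set b := q ^ d - 1 with hb
    have e1 : a * q ^ d =
        q ^ (2 * s) - q ^ (2 * s - 1) - q ^ (s + 1) - q ^ d := by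
      rw [ha, Nat.sub_mul, Nat.sub_mul, Nat.sub_mul, one_mul, g3, g2, g4]
    have key : a * q ^ d + b = T := by rw [e1, hb, hT]; omega
    have hrot : (a * q ^ d + b) * q ^ j % (q ^ (2 * s) - 1) = b * q ^ j + a :=
      rot_core (q ^ d) (q ^ j) (q ^ (2 * s)) a b gd gj g1
        (by rw [hb]; omega) (by rw [key]; exact hTN)
    rw [← key, hrot]
    have e2 : b * q ^ j = q ^ (2 * s) - q ^ j := by
      rw [hb, Nat.sub_mul, one_mul, g1]
    have g15 : q ^ j ≤ q ^ (2 * s) := Nat.pow_le_pow_right (by omega) (by omega)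
    omega

end Stmt7Aux

namespace Stmt7Aux
/-- minimality of T₁ = q^{2s}-1-q^{2s-1}-q^{s-1} among cyclic shifts -/
lemma min_lem1 (q s j : ℕ) (hq : 2 ≤ q) (hs : 5 ≤ s) (hj : j < 2 * s) :
    q ^ (2 * s) - 1 - q ^ (2 * s - 1) - q ^ (s - 1) ≤
      (q ^ (2 * s) - 1 - q ^ (2 * s - 1) - q ^ (s - 1)) * q ^ j % (q ^ (2 * s) - 1) := by
  have hq0 : 0 < q := by omega
  set T := q ^ (2 * s) - 1 - q ^ (2 * s - 1) - q ^ (s - 1) with hT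
  have pC1 : q ^ (s - 1) < q ^ (2 * s - 1) :=
    Nat.pow_lt_pow_right (by omega) (by omega)
  have pBpos : 0 < q ^ (2 * s - 1) := pow_pos hq0 _
  have pCpos : 0 < q ^ (s - 1) := pow_pos hq0 _
  have pBA : q ^ (2 * s - 1) < q ^ (2 * s) :=
    Nat.pow_lt_pow_right (by omega) (by omega)
  have pBA2 : 2 * q ^ (2 * s - 1) ≤ q ^ (2 * s) := two_pow_le q _ _ hq (by omega)
  have pC2 : 2 * q ^ (s - 1) ≤ q ^ (2 * s - 1) := two_pow_le q _ _ hq (by omega)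
  have hTN : T < q ^ (2 * s) - 1 := by rw [hT]; omega
  rcases Nat.eq_zero_or_pos j with rfl | hj1
  · simp only [pow_zero, mul_one]
    rw [Nat.mod_eq_of_lt hTN]
  rcases Nat.lt_or_ge j (s + 1) with hcase | hcase
  · -- case a' : 1 ≤ j ≤ s, d = 2s - j ≥ s
    set d := 2 * s - j with hd
    have g1 : q ^ d * q ^ j = q ^ (2 * s) := by rw [← pow_add]; congr 1; omega
    have g2 : q ^ (j - 1) * q ^ d = q ^ (2 * s - 1) := by rw [← pow_add]; congr 1; omega
    have g3 : q ^ j * q ^ d = q ^ (2 * s) := by rw [← pow_add]; congr 1; omega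
    have g4 : q ^ (s - 1) * q ^ j = q ^ (s - 1 + j) := by rw [← pow_add]
    have g5 : q ^ (s - 1 + j) ≤ q ^ (2 * s - 1) :=
      Nat.pow_le_pow_right (by omega) (by omega)
    have g6 : q ^ (j - 1) ≤ q ^ (s - 1) :=
      Nat.pow_le_pow_right (by omega) (by omega)
    have g7 : q ^ (j - 1) < q ^ j := Nat.pow_lt_pow_right (by omega) (by omega)
    have g8 : q ^ (s - 1) < q ^ d := Nat.pow_lt_pow_right (by omega) (by omega)
    have g9 : q ^ d ≤ q ^ (2 * s - 1) := Nat.pow_le_pow_right (by omega) (by omega)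
    have gj : 0 < q ^ j := pow_pos hq0 _
    have gd : 0 < q ^ d := pow_pos hq0 _
    set a := q ^ j - q ^ (j - 1) - 1 with ha
    set b := q ^ d - q ^ (s - 1) - 1 with hb
    have e1 : a * q ^ d = q ^ (2 * s) - q ^ (2 * s - 1) - q ^ d := by
      rw [ha, Nat.sub_mul, Nat.sub_mul, one_mul, g3, g2]
    have key : a * q ^ d + b = T := by rw [e1, hb, hT]; omega
    have hrot : (a * q ^ d + b) * q ^ j % (q ^ (2 * s) - 1) = b * q ^ j + a :=
      rot_core (q ^ d) (q ^ j) (q ^ (2 * s)) a b gd gj g1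
        (by rw [hb]; omega) (by rw [key]; exact hTN)
    rw [← key, hrot]
    have e2 : b * q ^ j = q ^ (2 * s) - q ^ (s - 1 + j) - q ^ j := by
      rw [hb, Nat.sub_mul, Nat.sub_mul, one_mul, g1, g4]
    omega
  · -- case c' : s + 1 ≤ j ≤ 2s - 1, d = 2s - j ≤ s - 1
    set d := 2 * s - j with hd
    have g1 : q ^ d * q ^ j = q ^ (2 * s) := by rw [← pow_add]; congr 1; omega
    have g2 : q ^ (j - 1) * q ^ d = q ^ (2 * s - 1) := by rw [← pow_add]; congr 1; omega
    have g3 : q ^ j * q ^ d = q ^ (2 * s) := by rw [← pow_add]; congr 1; omega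
    have g4 : q ^ (j - s - 1) * q ^ d = q ^ (s - 1) := by rw [← pow_add]; congr 1; omega
    have g5 : q ^ (j - 1) ≤ q ^ (2 * s - 2) := Nat.pow_le_pow_right (by omega) (by omega)
    have g8 : 2 * q ^ (2 * s - 2) ≤ q ^ (2 * s - 1) := two_pow_le q _ _ hq (by omega)
    have gd : 0 < q ^ d := pow_pos hq0 _
    have gj : 0 < q ^ j := pow_pos hq0 _
    have hds : q ^ d ≤ q ^ (s - 1) := Nat.pow_le_pow_right (by omega) (by omega)
    have g11 : q ^ (j - 1) < q ^ j := Nat.pow_lt_pow_right (by omega) (by omega)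
    have g12 : q ^ (j - s - 1) ≤ q ^ (j - 1) := Nat.pow_le_pow_right (by omega) (by omega)
    have g13 : q ^ (j - s - 1) ≤ q ^ (s - 2) := Nat.pow_le_pow_right (by omega) (by omega)
    have g14 : q ^ (s - 2) ≤ q ^ (2 * s - 2) := Nat.pow_le_pow_right (by omega) (by omega)
    set a := q ^ j - q ^ (j - 1) - q ^ (j - s - 1) - 1 with ha
    set b := q ^ d - 1 with hb
    have e1 : a * q ^ d =
        q ^ (2 * s) - q ^ (2 * s - 1) - q ^ (s - 1) - q ^ d := by
      rw [ha, Nat.sub_mul, Nat.sub_mul, Nat.sub_mul, one_mul, g3, g2, g4]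
    have key : a * q ^ d + b = T := by rw [e1, hb, hT]; omega
    have hrot : (a * q ^ d + b) * q ^ j % (q ^ (2 * s) - 1) = b * q ^ j + a :=
      rot_core (q ^ d) (q ^ j) (q ^ (2 * s)) a b gd gj g1
        (by rw [hb]; omega) (by rw [key]; exact hTN)
    rw [← key, hrot]
    have e2 : b * q ^ j = q ^ (2 * s) - q ^ j := by
      rw [hb, Nat.sub_mul, one_mul, g1]
    have g15 : q ^ j ≤ q ^ (2 * s) := Nat.pow_le_pow_right (by omega) (by omega)
    omega
end Stmt7Aux
namespace Stmt7Aux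

lemma part3 (q s T : ℕ) (hq : 2 ≤ q) (hs : 5 ≤ s) (hodd : Odd s)
    (hlow : q ^ (2 * s) - 1 - q ^ (2 * s - 1) - q ^ (s + 1) < T)
    (hhigh : T < q ^ (2 * s) - 1 - q ^ (2 * s - 1) - q ^ (s - 1))
    (hdvd : (q + 1) ∣ T) :
    ∃ j, j < 2 * s ∧ T * q ^ j % (q ^ (2 * s) - 1) < T := by
  have hq0 : 0 < q := by omega
  -- power facts
  have pB : q ^ (2 * s - 1) * q = q ^ (2 * s) := by rw [← pow_succ]; congr 1; omega
  have pss : q ^ s * q ^ s = q ^ (2 * s) := by rw [← pow_add]; congr 1; omega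
  have ps1s : q ^ (s - 1) * q ^ s = q ^ (2 * s - 1) := by rw [← pow_add]; congr 1; omega
  have pDq : q ^ (s - 1) * q = q ^ s := by rw [← pow_succ]; congr 1; omega
  have pCD : q ^ (s - 1) < q ^ s := Nat.pow_lt_pow_right (by omega) (by omega)
  have pSC : q ^ s < q ^ (s + 1) := Nat.pow_lt_pow_right (by omega) (by omega)
  have pC1 : q ^ (s + 1) < q ^ (2 * s - 1) := Nat.pow_lt_pow_right (by omega) (by omega)
  have pBA : q ^ (2 * s - 1) < q ^ (2 * s) := Nat.pow_lt_pow_right (by omega) (by omega)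
  have pBA2 : 2 * q ^ (2 * s - 1) ≤ q ^ (2 * s) := two_pow_le q _ _ hq (by omega)
  have pC2 : 2 * q ^ (s + 1) ≤ q ^ (2 * s - 1) := two_pow_le q _ _ hq (by omega)
  have pDpos : 0 < q ^ (s - 1) := pow_pos hq0 _
  have pSpos : 0 < q ^ s := pow_pos hq0 _
  -- r
  obtain ⟨r, hTr⟩ : ∃ r, T + r = q ^ (2 * s) - 1 - q ^ (2 * s - 1) :=
    ⟨q ^ (2 * s) - 1 - q ^ (2 * s - 1) - T, by omega⟩
  have hr1 : q ^ (s - 1) < r := by omega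
  have hr2 : r < q ^ (s + 1) := by omega
  rcases Nat.lt_or_ge r (q ^ s) with hcA | hcA
  · -- Case A : q^{s-1} < r < q^s, shift j = s
    refine ⟨s, by omega, ?_⟩
    set a := q ^ s - q ^ (s - 1) - 1 with ha
    set b := q ^ s - 1 - r with hb
    have e1 : a * q ^ s = q ^ (2 * s) - q ^ (2 * s - 1) - q ^ s := by
      rw [ha, Nat.sub_mul, Nat.sub_mul, one_mul, pss, ps1s]
    have key : a * q ^ s + b = T := by rw [e1, hb]; omega
    have hrot : (a * q ^ s + b) * q ^ s % (q ^ (2 * s) - 1) = b * q ^ s + a :=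
      rot_core (q ^ s) (q ^ s) (q ^ (2 * s)) a b pSpos pSpos pss
        (by rw [hb]; omega) (by rw [key]; omega)
    rw [← key, hrot]
    have e2 : b * q ^ s = q ^ (2 * s) - q ^ s - r * q ^ s := by
      rw [hb, Nat.sub_mul, Nat.sub_mul, one_mul, pss]
    have hub : r * q ^ s ≤ (q ^ s - 1) * q ^ s := Nat.mul_le_mul_right _ (by omega)
    have hub2 : (q ^ s - 1) * q ^ s = q ^ (2 * s) - q ^ s := by
      rw [Nat.sub_mul, one_mul, pss]
    have hlb : (q ^ (s - 1) + 1) * q ^ s ≤ r * q ^ s := Nat.mul_le_mul_right _ (by omega)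
    have hlb2 : (q ^ (s - 1) + 1) * q ^ s = q ^ (2 * s - 1) + q ^ s := by
      rw [add_mul, one_mul, ps1s]
    omega
  rcases Nat.lt_or_ge r (q ^ s + q) with hcC | hcB
  · -- Case C : q^s ≤ r ≤ q^s + q - 1 ; divisibility forces r = q^s + 2
    obtain ⟨e, hedef⟩ : ∃ e, r = q ^ s + e := ⟨r - q ^ s, by omega⟩
    have hebd : e ≤ q - 1 := by omega
    have hqm : (q : ℤ) ≡ -1 [ZMOD ((q : ℤ) + 1)] :=
      Int.ModEq.symm (Int.modEq_iff_dvd.mpr ⟨1, by ring⟩)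
    have hA' : (q : ℤ) ^ (2 * s) ≡ 1 [ZMOD ((q : ℤ) + 1)] := by
      have := hqm.pow (2 * s)
      simpa [pow_mul] using this
    have hB' : (q : ℤ) ^ (2 * s - 1) ≡ -1 [ZMOD ((q : ℤ) + 1)] := by
      have h1 := hqm.pow (2 * s - 1)
      have h2 : (-1 : ℤ) ^ (2 * s - 1) = -1 := Odd.neg_one_pow (by
        exact ⟨s - 1, by omega⟩)
      rwa [h2] at h1
    have hS' : (q : ℤ) ^ s ≡ -1 [ZMOD ((q : ℤ) + 1)] := by
      have h1 := hqm.pow s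
      have h2 : (-1 : ℤ) ^ s = -1 := Odd.neg_one_pow hodd
      rwa [h2] at h1
    have c1 : ((q ^ (2 * s) : ℕ) : ℤ) = (q : ℤ) ^ (2 * s) := by push_cast; ring
    have c2 : ((q ^ (2 * s - 1) : ℕ) : ℤ) = (q : ℤ) ^ (2 * s - 1) := by push_cast; ring
    have c3 : ((q ^ s : ℕ) : ℤ) = (q : ℤ) ^ s := by push_cast; ring
    have hTZ : (T : ℤ) = (q : ℤ) ^ (2 * s) - 1 - (q : ℤ) ^ (2 * s - 1) - (q : ℤ) ^ s
        - (e : ℤ) := by omega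
    have hTmod : (T : ℤ) ≡ 2 - (e : ℤ) [ZMOD ((q : ℤ) + 1)] := by
      rw [hTZ]
      calc (q : ℤ) ^ (2 * s) - 1 - (q : ℤ) ^ (2 * s - 1) - (q : ℤ) ^ s - (e : ℤ)
          ≡ 1 - 1 - (-1) - (-1) - (e : ℤ) [ZMOD ((q : ℤ) + 1)] :=
            Int.ModEq.sub (Int.ModEq.sub (Int.ModEq.sub (hA'.sub (Int.ModEq.refl 1)) hB') hS')
              (Int.ModEq.refl _)
        _ = 2 - (e : ℤ) := by ring
    have hTdvdZ : ((q : ℤ) + 1) ∣ (T : ℤ) := by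
      obtain ⟨k, hk⟩ := hdvd
      exact ⟨(k : ℤ), by push_cast [hk]; ring⟩
    have hedvd : ((q : ℤ) + 1) ∣ (2 - (e : ℤ)) := by
      have h0 : (T : ℤ) ≡ 0 [ZMOD ((q : ℤ) + 1)] := (Int.modEq_zero_iff_dvd).mpr hTdvdZ
      exact (Int.modEq_zero_iff_dvd).mp (hTmod.symm.trans h0)
    have he2 : e = 2 := by
      have habs : |2 - (e : ℤ)| < (q : ℤ) + 1 := by
        rw [abs_lt]; constructor <;> omega
      have := Int.eq_zero_of_abs_lt_dvd hedvd habs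
      omega
    have hq3 : 3 ≤ q := by omega
    have hTval : T = q ^ (2 * s) - 1 - q ^ (2 * s - 1) - q ^ s - 2 := by omega
    clear hqm hA' hB' hS' c1 c2 c3 hTZ hTmod hTdvdZ hedvd hebd hedef hdvd
    -- shift j = 2s - 1, bottom digit q - 3
    refine ⟨2 * s - 1, by omega, ?_⟩
    set a := q ^ (2 * s - 1) - q ^ (2 * s - 2) - q ^ (s - 1) - 1 with ha
    set b := q - 3 with hb
    have pB2 : q ^ (2 * s - 2) * q = q ^ (2 * s - 1) := by rw [← pow_succ]; congr 1; omega
    have pB2B : q ^ (2 * s - 2) < q ^ (2 * s - 1) := Nat.pow_lt_pow_right (by omega) (by omega)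
    have pDB2 : q ^ (s - 1) < q ^ (2 * s - 2) := Nat.pow_lt_pow_right (by omega) (by omega)
    have pDB3 : 2 * q ^ s ≤ q ^ (2 * s - 2) := two_pow_le q _ _ hq (by omega)
    have pB3 : 2 * q ^ (2 * s - 2) ≤ q ^ (2 * s - 1) := two_pow_le q _ _ hq (by omega)
    have p3B : 3 * q ^ (2 * s - 1) ≤ q ^ (2 * s) := by
      have h3 : q ^ (2 * s - 1) * 3 ≤ q ^ (2 * s - 1) * q := Nat.mul_le_mul_left _ hq3
      omega
    have pSC2 : 2 * q ^ s ≤ q ^ (s + 1) := two_pow_le q _ _ hq (by omega)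
    have pqS : q < q ^ s := by
      calc q = q ^ 1 := (pow_one q).symm
        _ < q ^ s := Nat.pow_lt_pow_right (by omega) (by omega)
    have pq4 : 4 ≤ q ^ s := by
      have h1 : 2 * q ≤ q ^ 2 := by nlinarith
      have h2 : q ^ 2 ≤ q ^ s := Nat.pow_le_pow_right (by omega) (by omega)
      omega
    have e1 : a * q = q ^ (2 * s) - q ^ (2 * s - 1) - q ^ s - q := by
      rw [ha, Nat.sub_mul, Nat.sub_mul, Nat.sub_mul, one_mul, pB, pB2, pDq]
    have key : a * q + b = T := by rw [e1, hb]; omega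
    have hrot : (a * q + b) * q ^ (2 * s - 1) % (q ^ (2 * s) - 1) = b * q ^ (2 * s - 1) + a := by
      have h1 : q * q ^ (2 * s - 1) = q ^ (2 * s) := by rw [mul_comm]; exact pB
      exact rot_core q (q ^ (2 * s - 1)) (q ^ (2 * s)) a b hq0
        (pow_pos hq0 _) h1 (by rw [hb]; omega) (by rw [key]; omega)
    rw [← key, hrot]
    have e2 : b * q ^ (2 * s - 1) = q ^ (2 * s) - 3 * q ^ (2 * s - 1) := by
      rw [hb, Nat.sub_mul]
      congr 1
      rw [mul_comm]
      exact pB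
    omega
  · -- Case B : q^s + q ≤ r < q^{s+1}, shift j = s - 1
    refine ⟨s - 1, by omega, ?_⟩
    set a := q ^ (s - 1) - q ^ (s - 2) - 1 with ha
    set b := q ^ (s + 1) - 1 - r with hb
    have pD1 : q ^ (s - 1) * q ^ (s + 1) = q ^ (2 * s) := by rw [← pow_add]; congr 1; omega
    have pD2 : q ^ (s - 2) * q ^ (s + 1) = q ^ (2 * s - 1) := by rw [← pow_add]; congr 1; omega
    have pD3 : q ^ (s + 1) * q ^ (s - 1) = q ^ (2 * s) := by rw [← pow_add]; congr 1; omega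
    have pD4 : q ^ s * q ^ (s - 1) = q ^ (2 * s - 1) := by rw [← pow_add]; congr 1; omega
    have pD5 : q * q ^ (s - 1) = q ^ s := by
      rw [mul_comm, ← pow_succ]; congr 1; omega
    have pD6 : q ^ (s - 2) < q ^ (s - 1) := Nat.pow_lt_pow_right (by omega) (by omega)
    have pD7 : q < q ^ (s - 2) := by
      calc q = q ^ 1 := (pow_one q).symm
        _ < q ^ (s - 2) := Nat.pow_lt_pow_right (by omega) (by omega)
    have pD1pos : 0 < q ^ (s - 1) := pow_pos hq0 _
    have pC1pos : 0 < q ^ (s + 1) := pow_pos hq0 _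
    have e1 : a * q ^ (s + 1) = q ^ (2 * s) - q ^ (2 * s - 1) - q ^ (s + 1) := by
      rw [ha, Nat.sub_mul, Nat.sub_mul, one_mul, pD1, pD2]
    have key : a * q ^ (s + 1) + b = T := by rw [e1, hb]; omega
    have hrot : (a * q ^ (s + 1) + b) * q ^ (s - 1) % (q ^ (2 * s) - 1)
        = b * q ^ (s - 1) + a :=
      rot_core (q ^ (s + 1)) (q ^ (s - 1)) (q ^ (2 * s)) a b
        pC1pos pD1pos pD3 (by rw [hb]; omega) (by rw [key]; omega)
    rw [← key, hrot]
    have e2 : b * q ^ (s - 1) = q ^ (2 * s) - q ^ (s - 1) - r * q ^ (s - 1) := by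
      rw [hb, Nat.sub_mul, Nat.sub_mul, one_mul, pD3]
    have h1 : (q ^ s + q) * (q ^ (s - 1) - 1) ≤ r * (q ^ (s - 1) - 1) :=
      Nat.mul_le_mul_right _ hcB
    have h2 : (q ^ s + q) * (q ^ (s - 1) - 1) = q ^ (2 * s - 1) - q := by
      rw [Nat.mul_sub, mul_one, add_mul, pD4, pD5]
      omega
    have h3 : r * (q ^ (s - 1) - 1) = r * q ^ (s - 1) - r := by
      rw [Nat.mul_sub, mul_one]
    have h4 : r * q ^ (s - 1) ≤ (q ^ (s + 1) - 1) * q ^ (s - 1) :=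
      Nat.mul_le_mul_right _ (by omega)
    have h5 : (q ^ (s + 1) - 1) * q ^ (s - 1) = q ^ (2 * s) - q ^ (s - 1) := by
      rw [Nat.sub_mul, one_mul, pD3]
    omega

end Stmt7Aux

namespace Stmt7Aux

lemma red (q n t j m : ℕ) (hn : 1 < n) (h1 : q ^ m % n = 1) (hm : 0 < m) :
    t * q ^ j % n = t * q ^ (j % m) % n := by
  have hmod : q ^ m ≡ 1 [MOD n] := by
    unfold Nat.ModEq
    rw [h1, Nat.mod_eq_of_lt hn]
  have h2 : q ^ j = (q ^ m) ^ (j / m) * q ^ (j % m) := by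
    rw [← pow_mul, ← pow_add]
    congr 1
    exact (Nat.div_add_mod j m).symm
  have h3 : (q ^ m) ^ (j / m) ≡ 1 [MOD n] := by
    simpa using hmod.pow (j / m)
  have h4 : t * q ^ j ≡ t * q ^ (j % m) [MOD n] := by
    calc t * q ^ j = t * q ^ (j % m) * (q ^ m) ^ (j / m) := by rw [h2]; ring
      _ ≡ t * q ^ (j % m) * 1 [MOD n] := h3.mul_left _
      _ = t * q ^ (j % m) := by ring
  exact h4

lemma sq_helper (x : ℕ) (hx : 1 ≤ x) : (x + 1) * (x - 1) = x * x - 1 := by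
  obtain ⟨y, rfl⟩ := Nat.exists_eq_add_of_le hx
  have h : 1 + y - 1 = y := by omega
  rw [h]
  have : (1 + y) * (1 + y) = (1 + y + 1) * y + 1 := by ring
  omega

end Stmt7Aux

/-- `t` is a q-cyclotomic coset leader modulo `n`. -/
def IsCosetLeader (q n t : ℕ) : Prop :=
  t < n ∧ ∀ j : ℕ, t ≤ t * q ^ j % n

/-- δ₂ = ((q-1)q^{2s-1}-q^{s+1}-1)/(q+1) is the second largest
q-cyclotomic coset leader modulo n = (q^{2s}-1)/(q+1). -/
theorem stmt_7 (q s : ℕ) (hq : IsPrimePow q) (hs : Odd s) (hs4 : 4 < s) :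
    IsCosetLeader q ((q ^ (2 * s) - 1) / (q + 1))
        (((q - 1) * q ^ (2 * s - 1) - q ^ (s + 1) - 1) / (q + 1)) ∧
    IsCosetLeader q ((q ^ (2 * s) - 1) / (q + 1))
        (((q - 1) * q ^ (2 * s - 1) - q ^ (s - 1) - 1) / (q + 1)) ∧
    ((q - 1) * q ^ (2 * s - 1) - q ^ (s + 1) - 1) / (q + 1)
        < ((q - 1) * q ^ (2 * s - 1) - q ^ (s - 1) - 1) / (q + 1) ∧
    ∀ a : ℕ,
      ((q - 1) * q ^ (2 * s - 1) - q ^ (s + 1) - 1) / (q + 1) < a →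
      a < ((q - 1) * q ^ (2 * s - 1) - q ^ (s - 1) - 1) / (q + 1) →
      ¬ IsCosetLeader q ((q ^ (2 * s) - 1) / (q + 1)) a := by
  have hq2 : 2 ≤ q := hq.two_le
  have hs5 : 5 ≤ s := by omega
  have hq0 : 0 < q := by omega
  -- power facts
  have pB' : q * q ^ (2 * s - 1) = q ^ (2 * s) := by
    rw [mul_comm, ← pow_succ]; congr 1; omega
  have pC1 : q ^ (s + 1) < q ^ (2 * s - 1) := Nat.pow_lt_pow_right (by omega) (by omega)
  have pCD : q ^ (s - 1) < q ^ (s + 1) := Nat.pow_lt_pow_right (by omega) (by omega)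
  have pBA : q ^ (2 * s - 1) < q ^ (2 * s) := Nat.pow_lt_pow_right (by omega) (by omega)
  have pBA2 : 2 * q ^ (2 * s - 1) ≤ q ^ (2 * s) := Stmt7Aux.two_pow_le q _ _ hq2 (by omega)
  have pC2 : 2 * q ^ (s + 1) ≤ q ^ (2 * s - 1) := Stmt7Aux.two_pow_le q _ _ hq2 (by omega)
  have pDpos : 0 < q ^ (s - 1) := pow_pos hq0 _
  have pSpos : 0 < q ^ s := pow_pos hq0 _
  -- divisibility facts
  have hss : q ^ s * q ^ s = q ^ (2 * s) := by rw [← pow_add]; congr 1; omega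
  have hqs1 : (q + 1) ∣ q ^ s + 1 := by
    simpa using Odd.nat_add_dvd_pow_add_pow q 1 hs
  have hsq : (q ^ s + 1) * (q ^ s - 1) = q ^ (2 * s) - 1 := by
    rw [Stmt7Aux.sq_helper (q ^ s) pSpos, hss]
  have hN : (q + 1) ∣ q ^ (2 * s) - 1 := by
    rw [← hsq]; exact Dvd.dvd.mul_right hqs1 _
  have hodd2 : Odd (s - 2) := by
    obtain ⟨k, hk⟩ := hs; exact ⟨k - 1, by omega⟩
  have hq2s : (q + 1) ∣ q ^ (s - 2) + 1 := by
    simpa using Odd.nat_add_dvd_pow_add_pow q 1 hodd2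
  have hfac2 : q ^ (s + 1) * (q ^ (s - 2) + 1) = q ^ (2 * s - 1) + q ^ (s + 1) := by
    have h : q ^ (s + 1) * q ^ (s - 2) = q ^ (2 * s - 1) := by
      rw [← pow_add]; congr 1; omega
    rw [mul_add, mul_one, h]
  have hdvd2' : (q + 1) ∣ q ^ (2 * s - 1) + q ^ (s + 1) := by
    rw [← hfac2]; exact Dvd.dvd.mul_left hq2s _
  have hfac1 : q ^ (s - 1) * (q ^ s + 1) = q ^ (2 * s - 1) + q ^ (s - 1) := by
    have h : q ^ (s - 1) * q ^ s = q ^ (2 * s - 1) := by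
      rw [← pow_add]; congr 1; omega
    rw [mul_add, mul_one, h]
  have hdvd1' : (q + 1) ∣ q ^ (2 * s - 1) + q ^ (s - 1) := by
    rw [← hfac1]; exact Dvd.dvd.mul_left hqs1 _
  -- numerators agree
  have hqB : (q - 1) * q ^ (2 * s - 1) = q ^ (2 * s) - q ^ (2 * s - 1) := by
    rw [Nat.sub_mul, one_mul, pB']
  have hM2 : (q - 1) * q ^ (2 * s - 1) - q ^ (s + 1) - 1
      = q ^ (2 * s) - 1 - q ^ (2 * s - 1) - q ^ (s + 1) := by
    rw [hqB]; omega
  have hM1 : (q - 1) * q ^ (2 * s - 1) - q ^ (s - 1) - 1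
      = q ^ (2 * s) - 1 - q ^ (2 * s - 1) - q ^ (s - 1) := by
    rw [hqB]; omega
  have hT2dvd : (q + 1) ∣ q ^ (2 * s) - 1 - q ^ (2 * s - 1) - q ^ (s + 1) := by
    have h : q ^ (2 * s) - 1 - q ^ (2 * s - 1) - q ^ (s + 1)
        = (q ^ (2 * s) - 1) - (q ^ (2 * s - 1) + q ^ (s + 1)) := by omega
    rw [h]; exact Nat.dvd_sub hN hdvd2'
  have hT1dvd : (q + 1) ∣ q ^ (2 * s) - 1 - q ^ (2 * s - 1) - q ^ (s - 1) := by
    have h : q ^ (2 * s) - 1 - q ^ (2 * s - 1) - q ^ (s - 1)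
        = (q ^ (2 * s) - 1) - (q ^ (2 * s - 1) + q ^ (s - 1)) := by omega
    rw [h]; exact Nat.dvd_sub hN hdvd1'
  -- delta and n relations
  have hnm : (q + 1) * ((q ^ (2 * s) - 1) / (q + 1)) = q ^ (2 * s) - 1 :=
    Nat.mul_div_cancel' hN
  have hd2 : (q + 1) * (((q - 1) * q ^ (2 * s - 1) - q ^ (s + 1) - 1) / (q + 1))
      = q ^ (2 * s) - 1 - q ^ (2 * s - 1) - q ^ (s + 1) := by
    rw [hM2]; exact Nat.mul_div_cancel' hT2dvd
  have hd1 : (q + 1) * (((q - 1) * q ^ (2 * s - 1) - q ^ (s - 1) - 1) / (q + 1))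
      = q ^ (2 * s) - 1 - q ^ (2 * s - 1) - q ^ (s - 1) := by
    rw [hM1]; exact Nat.mul_div_cancel' hT1dvd
  have hbig : q + 3 ≤ q ^ (2 * s) := by
    have h1 : q ^ 3 ≤ q ^ (2 * s) := Nat.pow_le_pow_right (by omega) (by omega)
    have h2 : q ^ 3 = q * q * q := by ring
    nlinarith
  have hn1 : 1 < (q ^ (2 * s) - 1) / (q + 1) := by
    by_contra h
    push_neg at h
    have h2 : (q + 1) * ((q ^ (2 * s) - 1) / (q + 1)) ≤ (q + 1) * 1 :=
      Nat.mul_le_mul_left _ h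
    rw [hnm] at h2
    omega
  have hmod1 : q ^ (2 * s) % ((q ^ (2 * s) - 1) / (q + 1)) = 1 := by
    set n := (q ^ (2 * s) - 1) / (q + 1) with hndef
    have hc : n * (q + 1) = (q + 1) * n := mul_comm _ _
    have h1 : q ^ (2 * s) = n * (q + 1) + 1 := by omega
    rw [h1, Nat.mul_add_mod]
    exact Nat.mod_eq_of_lt hn1
  -- generic coset-leader builder
  have leader : ∀ (δ T : ℕ), (q + 1) * δ = T →
      (∀ j, j < 2 * s → T ≤ T * q ^ j % (q ^ (2 * s) - 1)) →
      T < q ^ (2 * s) - 1 →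
      IsCosetLeader q ((q ^ (2 * s) - 1) / (q + 1)) δ := by
    intro δ T hδ hmin hTN
    constructor
    · have h2 : (q + 1) * δ < (q + 1) * ((q ^ (2 * s) - 1) / (q + 1)) := by omega
      exact Nat.lt_of_mul_lt_mul_left h2
    · intro j
      rw [Stmt7Aux.red q ((q ^ (2 * s) - 1) / (q + 1)) δ j (2 * s) hn1 hmod1 (by omega)]
      have hb : (q + 1) * (δ * q ^ (j % (2 * s))) % ((q + 1) * ((q ^ (2 * s) - 1) / (q + 1)))
          = (q + 1) * (δ * q ^ (j % (2 * s)) % ((q ^ (2 * s) - 1) / (q + 1))) :=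
        Nat.mul_mod_mul_left _ _ _
      rw [hnm] at hb
      have h3 : (q + 1) * (δ * q ^ (j % (2 * s))) = T * q ^ (j % (2 * s)) := by
        rw [← hδ]; ring
      rw [h3] at hb
      have h4 := hmin (j % (2 * s)) (Nat.mod_lt _ (by omega))
      rw [hb] at h4
      rw [← hδ] at h4
      exact Nat.le_of_mul_le_mul_left h4 (by omega)
  refine ⟨?_, ?_, ?_, ?_⟩
  · exact leader _ _ hd2 (fun j hj => Stmt7Aux.min_lem2 q s j hq2 hs5 hj) (by omega)
  · exact leader _ _ hd1 (fun j hj => Stmt7Aux.min_lem1 q s j hq2 hs5 hj) (by omega)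
  · have h2 : (q + 1) * (((q - 1) * q ^ (2 * s - 1) - q ^ (s + 1) - 1) / (q + 1))
        < (q + 1) * (((q - 1) * q ^ (2 * s - 1) - q ^ (s - 1) - 1) / (q + 1)) := by omega
    exact Nat.lt_of_mul_lt_mul_left h2
  · intro a hlt2 hlt1 ⟨haN, hall⟩
    have hT2a : q ^ (2 * s) - 1 - q ^ (2 * s - 1) - q ^ (s + 1) < (q + 1) * a := by
      have h := (mul_lt_mul_iff_right₀ (show 0 < q + 1 by omega)).mpr hlt2
      rw [hd2] at h
      exact h
    have hT1a : (q + 1) * a < q ^ (2 * s) - 1 - q ^ (2 * s - 1) - q ^ (s - 1) := by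
      have h := (mul_lt_mul_iff_right₀ (show 0 < q + 1 by omega)).mpr hlt1
      rw [hd1] at h
      exact h
    obtain ⟨j, hj, hshift⟩ := Stmt7Aux.part3 q s ((q + 1) * a) hq2 hs5 hs hT2a hT1a
      (dvd_mul_right _ _)
    have h4 := hall j
    have h5 : (q + 1) * a ≤ (q + 1) * (a * q ^ j % ((q ^ (2 * s) - 1) / (q + 1))) :=
      Nat.mul_le_mul_left _ h4
    have hb : (q + 1) * (a * q ^ j) % ((q + 1) * ((q ^ (2 * s) - 1) / (q + 1)))
        = (q + 1) * (a * q ^ j % ((q ^ (2 * s) - 1) / (q + 1))) :=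
      Nat.mul_mod_mul_left _ _ _
    rw [hnm] at hb
    have h6 : (q + 1) * (a * q ^ j) = (q + 1) * a * q ^ j := by ring
    rw [h6] at hb
    omega
end

section
/- Let q be an even prime power, s even with s ≥ 4, m = 2s, and n = (q^{2s}-1)/(q+1). Let i be an integer with ⌈q/2⌉·q^{s-1} ≤ i < (q^{s+1}+1)/(q+1) and q ∤ i. Then i is NOT a q-cyclotomic coset leader modulo n if and only if i = ((q-t)q^s + (t+1))/(q+1) for some integer t with 1 ≤ t ≤ (q-2)/2. -/
/-!
Multiply through by `q + 1`: with `a = (q + 1) i` and `N = q ^ (2s) - 1 = (q + 1) n`, the index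
`i` is a coset leader iff `a ≤ a q^k mod N` for all `k < 2s`. Modulo `q ^ (e + k) - 1`,
multiplication by `q ^ k` cyclically rotates the base-`q` digits, moving the lowest `e` of them to
the top. The bound on `i` gives `a < q ^ (s + 1)`, so `a = c q^s + d` with `c < q`. Rotations by
`k < s` do not wrap around; for `s < k < 2s` the lowest block of digits, nonzero because `q ∤ a`,
lands above `q ^ (s + 1)`; and rotation by `s` gives `d q^s + c`, which is smaller than `a` iff
`d < c`. As `s` is even, `q ^ s ≡ 1 mod (q + 1)`, so `q + 1 ∣ c + d`; with `0 < c + d < 2q` this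
forces `c + d = q + 1`, i.e. `c = q - t` and `d = t + 1`.
-/

theorem Nat.pow_modEq_one_of_even {q s : ℕ} (hs : Even s) : q ^ s ≡ 1 [MOD q + 1] := by
  have hq : (q : ℤ) ≡ -1 [ZMOD (q + 1 : ℕ)] :=
    Int.modEq_iff_dvd.mpr ⟨-1, by push_cast; ring⟩
  rw [← Int.natCast_modEq_iff]
  simpa [hs.neg_one_pow] using hq.pow s

theorem Nat.mul_pow_modEq_mul_pow_mod {q n m : ℕ} (hm : q ^ m ≡ 1 [MOD n]) (x j : ℕ) :
    x * q ^ j ≡ x * q ^ (j % m) [MOD n] := by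
  conv_lhs => rw [← Nat.div_add_mod j m, pow_add, pow_mul]
  simpa using ((hm.pow (j / m)).mul_right (q ^ (j % m))).mul_left x

theorem isCosetLeader_iff_forall_lt {q n m i : ℕ} (hm0 : 0 < m) (hm : q ^ m ≡ 1 [MOD n]) :
    IsCosetLeader q n i ↔ i < n ∧ ∀ j < m, i ≤ i * q ^ j % n := by
  refine and_congr_right fun _ => ⟨fun h j _ => h j, fun h j => ?_⟩
  rw [Nat.mul_pow_modEq_mul_pow_mod hm i j]
  exact h _ (Nat.mod_lt j hm0)

theorem le_mul_pow_mod_iff_mul_right {q n i k : ℕ} (hk : 0 < k) (j : ℕ) :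
    i ≤ i * q ^ j % n ↔ i * k ≤ i * k * q ^ j % (k * n) := by
  rw [mul_right_comm, mul_comm k, Nat.mul_mod_mul_right]
  exact (Nat.mul_le_mul_right_iff hk).symm

theorem isCosetLeader_iff_of_pow_sub_one_eq_mul {q n m k i : ℕ} (hq : 0 < q) (hm : 0 < m)
    (hk : 0 < k) (hN : q ^ m - 1 = k * n) :
    IsCosetLeader q n i ↔ i < n ∧ ∀ j < m, i * k ≤ i * k * q ^ j % (q ^ m - 1) := by
  have hperiod : q ^ m ≡ 1 [MOD n] :=
    ((Nat.modEq_iff_dvd' (Nat.one_le_pow _ _ hq)).mpr (Dvd.intro_left _ hN.symm)).symm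
  rw [isCosetLeader_iff_forall_lt hm hperiod, hN]
  exact and_congr_right fun _ => forall₂_congr fun j _ => le_mul_pow_mod_iff_mul_right hk j

theorem mul_pow_mod_pow_add_sub_one {q a e k : ℕ}
    (h : a % q ^ e * q ^ k + a / q ^ e < q ^ (e + k) - 1) :
    a * q ^ k % (q ^ (e + k) - 1) = a % q ^ e * q ^ k + a / q ^ e := by
  have hpos : 1 ≤ q ^ (e + k) := Nat.one_le_iff_ne_zero.mpr fun h0 => by simp [h0] at h
  rw [Nat.mod_eq_iff]
  refine Or.inr ⟨h, a / q ^ e, ?_⟩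
  obtain ⟨M, hM⟩ : ∃ M, q ^ (e + k) = M + 1 := ⟨_, (Nat.sub_add_cancel hpos).symm⟩
  conv_lhs => rw [← Nat.div_add_mod a (q ^ e)]
  rw [hM, Nat.add_sub_cancel]
  calc (q ^ e * (a / q ^ e) + a % q ^ e) * q ^ k
      = a / q ^ e * q ^ (e + k) + a % q ^ e * q ^ k := by ring
    _ = _ := by rw [hM]; ring

theorem Nat.pos_mod_pow_of_not_dvd {q a e : ℕ} (hqa : ¬ q ∣ a) (he : e ≠ 0) :
    0 < a % q ^ e :=
  Nat.pos_of_ne_zero fun h => hqa ((dvd_pow_self q he).trans (Nat.dvd_of_mod_eq_zero h))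

theorem Nat.mul_add_le_mul_add_iff {Q c d : ℕ} (hQ : 1 < Q) :
    Q * c + d ≤ d * Q + c ↔ c ≤ d :=
  ⟨fun h => by by_contra! hdc; nlinarith, fun h => by nlinarith⟩

section Rotation

variable {q s a : ℕ}

theorem le_mul_pow_mod_of_lt (hq : 2 ≤ q) (ha : a + q ≤ q ^ (s + 1)) {k : ℕ} (hk : k < s) :
    a ≤ a * q ^ k % (q ^ (2 * s) - 1) := by
  have hlt : a * q ^ k < q ^ (2 * s) - 1 := by
    have h1 : (a + q) * q ^ k ≤ q ^ (2 * s) := calc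
      (a + q) * q ^ k ≤ q ^ (s + 1) * q ^ k := Nat.mul_le_mul_right _ ha
      _ = q ^ (s + 1 + k) := (pow_add _ _ _).symm
      _ ≤ q ^ (2 * s) := Nat.pow_le_pow_right (by omega) (by omega)
    have h2 : 2 ≤ q * q ^ k := le_trans hq (Nat.le_mul_of_pos_right q (by positivity))
    rw [add_mul] at h1
    omega
  rw [Nat.mod_eq_of_lt hlt]
  exact Nat.le_mul_of_pos_right a (by positivity)

theorem mul_pow_self_mod (hq : 2 ≤ q) (hs : 2 ≤ s) (ha : a < q ^ (s + 1)) :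
    a * q ^ s % (q ^ (2 * s) - 1) = a % q ^ s * q ^ s + a / q ^ s := by
  rw [two_mul]
  apply mul_pow_mod_pow_add_sub_one
  have hlo : a % q ^ s + 1 ≤ q ^ s := Nat.mod_lt _ (by positivity)
  have hhi : a / q ^ s < q := by
    rw [Nat.div_lt_iff_lt_mul (by positivity), ← pow_succ']
    exact ha
  have hqs : q < q ^ s := by
    calc q = q ^ 1 := (pow_one q).symm
      _ < q ^ s := Nat.pow_lt_pow_right (by omega) (by omega)
  have h1 : (a % q ^ s + 1) * q ^ s ≤ q ^ (s + s) := by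
    rw [pow_add]; exact Nat.mul_le_mul_right _ hlo
  rw [add_mul, one_mul] at h1
  omega

theorem lt_mul_pow_mod_of_lt_of_lt (hq : 2 ≤ q) (ha : a < q ^ (s + 1)) (hqa : ¬ q ∣ a)
    {k : ℕ} (hsk : s < k) (hk : k < 2 * s) : a < a * q ^ k % (q ^ (2 * s) - 1) := by
  obtain ⟨e, he⟩ : ∃ e, 2 * s = e + k := ⟨2 * s - k, by omega⟩
  rw [he]
  have hlo : 0 < a % q ^ e := Nat.pos_mod_pow_of_not_dvd hqa (by omega)
  have hlo' : (a % q ^ e + 1) * q ^ k ≤ q ^ (e + k) := by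
    rw [pow_add]; exact Nat.mul_le_mul_right _ (Nat.mod_lt _ (by positivity))
  have hhi : a / q ^ e < q ^ (k - 1) := by
    rw [Nat.div_lt_iff_lt_mul (by positivity), ← pow_add]
    exact ha.trans_le (Nat.pow_le_pow_right (by omega) (by omega))
  have hk1 : q ^ (k - 1) < q ^ k := Nat.pow_lt_pow_right (by omega) (by omega)
  have hsk' : q ^ (s + 1) ≤ q ^ k := Nat.pow_le_pow_right (by omega) hsk
  rw [mul_pow_mod_pow_add_sub_one (by rw [add_mul, one_mul] at hlo'; omega)]
  calc a < q ^ k := ha.trans_le hsk'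
    _ ≤ a % q ^ e * q ^ k := Nat.le_mul_of_pos_left _ hlo
    _ ≤ _ := Nat.le_add_right _ _

theorem forall_le_mul_pow_mod_iff (hq : 2 ≤ q) (hs : 2 ≤ s) (ha : a + q ≤ q ^ (s + 1))
    (hqa : ¬ q ∣ a) :
    (∀ k < 2 * s, a ≤ a * q ^ k % (q ^ (2 * s) - 1)) ↔ a / q ^ s ≤ a % q ^ s := by
  have ha' : a < q ^ (s + 1) := by omega
  have hrot : a ≤ a * q ^ s % (q ^ (2 * s) - 1) ↔ a / q ^ s ≤ a % q ^ s := by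
    rw [mul_pow_self_mod hq hs ha']
    have h := Nat.mul_add_le_mul_add_iff (c := a / q ^ s) (d := a % q ^ s)
      (Nat.one_lt_pow (by omega : s ≠ 0) (by omega : 1 < q))
    rwa [Nat.div_add_mod] at h
  refine ⟨fun h => hrot.mp (h s (by omega)), fun h k hk => ?_⟩
  rcases lt_trichotomy k s with hks | rfl | hks
  · exact le_mul_pow_mod_of_lt hq ha hks
  · exact hrot.mpr h
  · exact (lt_mul_pow_mod_of_lt_of_lt hq ha' hqa hks hk).le

end Rotation

theorem mod_pow_lt_div_pow_iff {q s a : ℕ} (hq : 2 ≤ q) (hs : Even s) (hs0 : s ≠ 0)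
    (hdvd : q + 1 ∣ a) (ha : a < q ^ (s + 1)) (hqa : ¬ q ∣ a) :
    a % q ^ s < a / q ^ s ↔
      ∃ t, 1 ≤ t ∧ t ≤ (q - 2) / 2 ∧ a = (q - t) * q ^ s + (t + 1) := by
  have hQ : 0 < q ^ s := by positivity
  have hhi : a / q ^ s < q := by
    rw [Nat.div_lt_iff_lt_mul hQ, ← pow_succ']
    exact ha
  constructor
  · intro hlt
    have hdigits := Nat.div_add_mod a (q ^ s)
    have hlo := Nat.pos_mod_pow_of_not_dvd hqa hs0
    have hmod : a ≡ a / q ^ s + a % q ^ s [MOD q + 1] := by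
      conv_lhs => rw [← hdigits]
      simpa using ((Nat.pow_modEq_one_of_even hs).mul_right (a / q ^ s)).add_right (a % q ^ s)
    have hsum : a / q ^ s + a % q ^ s = q + 1 :=
      Nat.eq_of_dvd_of_lt_two_mul (by omega) ((hmod.dvd_iff dvd_rfl).mp hdvd) (by omega)
    refine ⟨q - a / q ^ s, by omega, by omega, ?_⟩
    rw [show q - (q - a / q ^ s) = a / q ^ s by omega, show q - a / q ^ s + 1 = a % q ^ s by omega]
    linarith
  · rintro ⟨t, ht1, ht2, rfl⟩
    have ht : t + 1 < q ^ s := by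
      have := Nat.le_self_pow hs0 q
      omega
    obtain ⟨hdiv, hmod⟩ := (Nat.div_mod_unique hQ (a := (q - t) * q ^ s + (t + 1)) (d := q - t)
      (c := t + 1)).mpr ⟨by ring, ht⟩
    rw [hdiv, hmod]
    omega

theorem stmt_8_general (q s i : ℕ) (hq : IsPrimePow q)
    (hs : 2 ∣ s) (hs4 : 4 ≤ s)
    (hiu : i < (q ^ (s + 1) + 1) / (q + 1))
    (hqi : ¬ q ∣ i) :
    ¬ IsCosetLeader q ((q ^ (2 * s) - 1) / (q + 1)) i ↔
      ∃ t : ℕ, 1 ≤ t ∧ t ≤ (q - 2) / 2 ∧ i * (q + 1) = (q - t) * q ^ s + (t + 1) := by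
  have hq2 : 2 ≤ q := hq.two_le
  obtain ⟨n, hn⟩ : q + 1 ∣ q ^ (2 * s) - 1 :=
    (Nat.modEq_iff_dvd' (Nat.one_le_pow _ _ (by omega))).mp
      (Nat.pow_modEq_one_of_even (even_two_mul s)).symm
  have ha : i * (q + 1) + q ≤ q ^ (s + 1) := by
    have := (Nat.le_div_iff_mul_le (by omega)).mp hiu
    linarith
  have hin : i < n := by
    have : q ^ (s + 1) * 2 ≤ q ^ (2 * s) := calc
      q ^ (s + 1) * 2 ≤ q ^ (s + 1) * q := Nat.mul_le_mul_left _ hq2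
      _ ≤ q ^ (2 * s) := by rw [← pow_succ]; exact Nat.pow_le_pow_right (by omega) (by omega)
    have : i * (q + 1) < n * (q + 1) := by rw [mul_comm n]; omega
    exact Nat.lt_of_mul_lt_mul_right this
  have hqa : ¬ q ∣ i * (q + 1) := fun h =>
    hqi ((Nat.coprime_self_add_right.mpr (Nat.coprime_one_right q)).dvd_of_dvd_mul_right h)
  rw [hn, Nat.mul_div_cancel_left _ (by omega),
    isCosetLeader_iff_of_pow_sub_one_eq_mul (by omega) (by omega) (by omega) hn, and_iff_right hin,
    forall_le_mul_pow_mod_iff hq2 (by omega) ha hqa, not_le,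
    mod_pow_lt_div_pow_iff hq2 (even_iff_two_dvd.mpr hs) (by omega) (dvd_mul_left _ _) (by omega)
      hqa]

/-- for q an even prime power and s even, s ≥ 4, an integer i with
⌈q/2⌉q^{s-1} ≤ i < (q^{s+1}+1)/(q+1) and q ∤ i fails to be a coset leader
modulo n = (q^{2s}-1)/(q+1) iff i(q+1) = (q-t)q^s + (t+1) for some
1 ≤ t ≤ (q-2)/2. -/
theorem stmt_8 (q s i : ℕ) (hq : IsPrimePow q) (hq2 : 2 ∣ q)
    (hs : 2 ∣ s) (hs4 : 4 ≤ s)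
    (hil : q / 2 * q ^ (s - 1) ≤ i) (hiu : i < (q ^ (s + 1) + 1) / (q + 1))
    (hqi : ¬ q ∣ i) :
    ¬ IsCosetLeader q ((q ^ (2 * s) - 1) / (q + 1)) i ↔
      ∃ t : ℕ, 1 ≤ t ∧ t ≤ (q - 2) / 2 ∧ i * (q + 1) = (q - t) * q ^ s + (t + 1) :=
  stmt_8_general q s i hq hs hs4 hiu hqi
end

section
/- Let q > 3, m ≥ q, and write m - 1 = a(q-1) with a ≥ 3 (i.e., m = a(q-1)+1). Let n = (q^m - 1)/(q-1). Then δ₂ = (q^m - 1 - q^{m-1} - q^{m-a} - Σ_{l=1}^{q-3} q^{a·l - 1})/(q-1) is a q-cyclotomic coset leader modulo n, and its q-cyclotomic coset has exactly m elements. -/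
/-!
Write `N = q ^ m - 1`. Then `(q - 1) * δ₂ = N - ∑ e ∈ E, q ^ e` for the set `E` of exponents
`m - 1`, `m - a` and `a * l - 1` (`1 ≤ l ≤ q - 3`), and `n = N / (q - 1)`. Multiplying by `q ^ j`
modulo `N` rotates the exponents cyclically modulo `m`, so `(q - 1) * (δ₂ * q ^ j % n)` is
`N - ∑ e ∈ E + j, q ^ e`. Hence δ₂ is a coset leader iff no rotation of `E` has a larger
`q`-adic sum, and its coset has `m` elements iff the `m` rotations of `E` are distinct.

Going around the circle `ℤ/m`, the gaps between consecutive elements of `E` are `a`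
(`q - 4` times), `a + 2`, `a - 1` and `a`; the only gap shorter than `a` ends at the top
exponent `m - 1`. So a nontrivial rotation of `E` either misses `m - 1`, or contains `m - 1` but
nothing in `[m - a, m - 2]`; either way its sum is below `q ^ (m - 1) + q ^ (m - a)`.
-/

namespace CyclotomicCoset

open Finset

-- The effect on exponents `e < m` of multiplying `∑ q ^ e` by `q ^ j` modulo `q ^ m - 1`.
def rotMod (m j : ℕ) (S : Finset ℕ) : Finset ℕ :=
  S.image fun e => (e + j) % m

section Rotation

variable {m : ℕ} {S : Finset ℕ}

lemma rotMod_subset_range (hm : 0 < m) (j : ℕ) : rotMod m j S ⊆ range m := by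
  intro k hk
  obtain ⟨e, -, rfl⟩ := mem_image.mp hk
  exact mem_range.mpr (Nat.mod_lt _ hm)

lemma rotMod_rotMod (j k : ℕ) : rotMod m k (rotMod m j S) = rotMod m (j + k) S := by
  simp only [rotMod, image_image, Function.comp_def, Nat.mod_add_mod, add_assoc]

lemma rotMod_of_mod_eq_zero (hS : S ⊆ range m) {j : ℕ} (hj : j % m = 0) :
    rotMod m j S = S := by
  conv_rhs => rw [← image_id (s := S)]
  refine image_congr fun e he => ?_
  simp [Nat.add_mod, hj, Nat.mod_eq_of_lt (mem_range.mp (hS he))]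

lemma sum_rotMod {M : Type*} [AddCommMonoid M] (hS : S ⊆ range m) (f : ℕ → M) (j : ℕ) :
    ∑ k ∈ rotMod m j S, f k = ∑ e ∈ S, f ((e + j) % m) := by
  refine sum_image fun e he e' he' h => ?_
  have h' : e ≡ e' [MOD m] := Nat.ModEq.add_right_cancel' j h
  rwa [Nat.ModEq, Nat.mod_eq_of_lt (mem_range.mp (hS he)),
    Nat.mod_eq_of_lt (mem_range.mp (hS he'))] at h'

lemma eq_of_rotMod_eq (hS : S ⊆ range m) (hfix : ∀ j, rotMod m j S = S → j % m = 0)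
    {j k : ℕ} (hj : j < m) (hk : k < m) (h : rotMod m j S = rotMod m k S) : j = k := by
  wlog hjk : j ≤ k generalizing j k
  · exact (this hk hj h.symm (le_of_not_ge hjk)).symm
  have hturn : rotMod m (j + (m - k)) S = S := by
    have hkm : (k + (m - k)) % m = 0 := by rw [Nat.add_sub_cancel' hk.le, Nat.mod_self]
    rw [← rotMod_rotMod, h, rotMod_rotMod, rotMod_of_mod_eq_zero hS hkm]
  have hzero := hfix _ hturn
  rcases hjk.eq_or_lt with hjk | hjk
  · exact hjk
  · rw [Nat.mod_eq_of_lt (by omega)] at hzero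
    omega

end Rotation

lemma mul_mod_div_eq {d N X : ℕ} (hN : d ∣ N) (hX : d ∣ X) (y : ℕ) :
    d * (X / d * y % (N / d)) = X * y % N := by
  rw [← Nat.mul_mod_mul_left, ← mul_assoc, Nat.mul_div_cancel' hX, Nat.mul_div_cancel' hN]

section GeomSum

variable {q m : ℕ} {S : Finset ℕ}

lemma pow_modEq_pow_mod (hq : 0 < q) (m k : ℕ) : q ^ k ≡ q ^ (k % m) [MOD q ^ m - 1] :=
  calc q ^ k = (q ^ m) ^ (k / m) * q ^ (k % m) := by
        rw [← pow_mul, ← pow_add, Nat.div_add_mod]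
    _ ≡ 1 ^ (k / m) * q ^ (k % m) [MOD q ^ m - 1] :=
        ((Nat.modEq_sub (Nat.one_le_pow _ _ hq)).pow _).mul_right _
    _ = q ^ (k % m) := by rw [one_pow, one_mul]

lemma geomSum_modEq_card (hq : 0 < q) (S : Finset ℕ) : ∑ e ∈ S, q ^ e ≡ #S [MOD q - 1] := by
  rw [card_eq_sum_ones]
  exact Nat.ModEq.sum fun e _ => by simpa using (Nat.modEq_sub hq).pow e

lemma geomSum_mul_pow_modEq (hq : 0 < q) (hS : S ⊆ range m) (j : ℕ) :
    (∑ e ∈ S, q ^ e) * q ^ j ≡ ∑ k ∈ rotMod m j S, q ^ k [MOD q ^ m - 1] := by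
  rw [sum_rotMod hS, sum_mul]
  exact Nat.ModEq.sum fun e _ => by rw [← pow_add]; exact pow_modEq_pow_mod hq m _

lemma sub_geomSum_mul_pow_mod (hq : 2 ≤ q) (hm : 0 < m) (hS : S ⊆ range m)
    (hne : S.Nonempty) (j : ℕ) :
    (q ^ m - 1 - ∑ e ∈ S, q ^ e) * q ^ j % (q ^ m - 1)
      = q ^ m - 1 - ∑ k ∈ rotMod m j S, q ^ k := by
  set P := ∑ e ∈ S, q ^ e
  set Pj := ∑ k ∈ rotMod m j S, q ^ k
  have hP : P < q ^ m := Nat.geomSum_lt hq fun k hk => mem_range.mp (hS hk)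
  have hPj : Pj < q ^ m :=
    Nat.geomSum_lt hq fun k hk => mem_range.mp (rotMod_subset_range hm j hk)
  have hPj0 : 0 < Pj := sum_pos (fun _ _ => by positivity) (hne.image _)
  have hN : q ^ m - 1 ≡ 0 [MOD q ^ m - 1] := Nat.modEq_zero_iff_dvd.mpr dvd_rfl
  have h : (q ^ m - 1 - P) * q ^ j + Pj ≡ (q ^ m - 1 - Pj) + Pj [MOD q ^ m - 1] :=
    calc (q ^ m - 1 - P) * q ^ j + Pj
        ≡ (q ^ m - 1 - P) * q ^ j + P * q ^ j [MOD q ^ m - 1] :=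
          (geomSum_mul_pow_modEq (by omega) hS j).symm.add_left _
      _ = (q ^ m - 1) * q ^ j := by rw [← add_mul, Nat.sub_add_cancel (by omega)]
      _ ≡ 0 * q ^ j [MOD q ^ m - 1] := hN.mul_right _
      _ = 0 := zero_mul _
      _ ≡ q ^ m - 1 [MOD q ^ m - 1] := hN.symm
      _ = (q ^ m - 1 - Pj) + Pj := (Nat.sub_add_cancel (by omega)).symm
  rw [h.add_right_cancel' Pj, Nat.mod_eq_of_lt (by omega)]

lemma geomSum_lt_pow_add_pow (hq : 2 ≤ q) {b c : ℕ} {T : Finset ℕ}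
    (hT : ∀ k ∈ T, k < b ∨ k = c) : ∑ k ∈ T, q ^ k < q ^ c + q ^ b := by
  rw [← sum_filter_add_sum_filter_not T (· = c)]
  have htop : ∑ k ∈ T with k = c, q ^ k ≤ q ^ c :=
    calc ∑ k ∈ T with k = c, q ^ k ≤ ∑ k ∈ {c}, q ^ k :=
          sum_le_sum_of_subset fun k hk => by simp [(mem_filter.mp hk).2]
      _ = q ^ c := sum_singleton _ _
  have hrest : ∑ k ∈ T with ¬k = c, q ^ k < q ^ b := Nat.geomSum_lt hq fun k hk => by
    obtain ⟨hk, hne⟩ := mem_filter.mp hk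
    exact (hT k hk).resolve_right hne
  omega

lemma sub_one_mul_mod_div_eq (hq : 2 ≤ q) (hm : 0 < m) (hS : S ⊆ range m) (hne : S.Nonempty)
    (hdvd : q - 1 ∣ q ^ m - 1 - ∑ e ∈ S, q ^ e) (j : ℕ) :
    (q - 1) * ((q ^ m - 1 - ∑ e ∈ S, q ^ e) / (q - 1) * q ^ j % ((q ^ m - 1) / (q - 1)))
      = q ^ m - 1 - ∑ k ∈ rotMod m j S, q ^ k := by
  rw [mul_mod_div_eq (Nat.sub_one_dvd_pow_sub_one q m) hdvd,
    sub_geomSum_mul_pow_mod hq hm hS hne]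

lemma sub_sum_rotMod_injOn (hq : 2 ≤ q) (hm : 0 < m) (hS : S ⊆ range m)
    (hfix : ∀ j, rotMod m j S = S → j % m = 0) :
    Set.InjOn (fun j => q ^ m - 1 - ∑ k ∈ rotMod m j S, q ^ k) (range m) := by
  intro j hj k hk hjk
  have hlt : ∀ i, ∑ k ∈ rotMod m i S, q ^ k < q ^ m := fun i =>
    Nat.geomSum_lt hq fun k hk => mem_range.mp (rotMod_subset_range hm i hk)
  have hsum : ∑ i ∈ rotMod m j S, q ^ i = ∑ i ∈ rotMod m k S, q ^ i := by
    have := hlt j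
    have := hlt k
    simp only at hjk
    omega
  exact eq_of_rotMod_eq hS hfix (mem_range.mp hj) (mem_range.mp hk) (geomSum_injective hq hsum)

end GeomSum

lemma le_mul_and_mul_le (a : ℕ) {n l : ℕ} (hl : 1 ≤ l ∧ l ≤ n) : a ≤ a * l ∧ a * l ≤ a * n :=
  ⟨Nat.le_mul_of_pos_right a hl.1, Nat.mul_le_mul_left a hl.2⟩

-- The positions of the digits `q - 2` of `(q - 1) * δ₂`; its other digits below `m` are `q - 1`.
def exponentSet (q m a : ℕ) : Finset ℕ :=
  insert (m - 1) (insert (m - a) ((Icc 1 (q - 3)).image fun l => a * l - 1))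

section ExponentSet

variable {q m a : ℕ}

lemma mem_exponentSet {e : ℕ} :
    e ∈ exponentSet q m a ↔
      e = m - 1 ∨ e = m - a ∨ ∃ l, (1 ≤ l ∧ l ≤ q - 3) ∧ a * l - 1 = e := by
  simp [exponentSet]

lemma eq_mul_add_of_eq_mul_sub_one (hq : 3 ≤ q) (hma : m = a * (q - 1) + 1) :
    m = a * (q - 3) + 2 * a + 1 := by
  obtain ⟨r, rfl⟩ := Nat.exists_eq_add_of_le hq
  rw [hma, show 3 + r - 1 = r + 2 by omega, show 3 + r - 3 = r by omega]
  ring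

lemma exponentSet_subset_range (hq : 3 ≤ q) (ha : 0 < a) (hma : m = a * (q - 1) + 1) :
    exponentSet q m a ⊆ range m := by
  have hm := eq_mul_add_of_eq_mul_sub_one hq hma
  intro e he
  rw [mem_range]
  rcases mem_exponentSet.mp he with rfl | rfl | ⟨l, hl, rfl⟩
  · omega
  · omega
  · have := le_mul_and_mul_le a hl
    omega

lemma mul_sub_one_injOn (ha : 0 < a) : Set.InjOn (fun l => a * l - 1) (Icc 1 (q - 3)) := by
  intro l hl l' hl' h
  have := le_mul_and_mul_le a (mem_Icc.mp hl)
  have := le_mul_and_mul_le a (mem_Icc.mp hl')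
  exact Nat.eq_of_mul_eq_mul_left ha (by simp only at h; omega)

lemma exponentSet_notMem (hq : 3 ≤ q) (ha : 2 ≤ a) (hma : m = a * (q - 1) + 1) :
    m - 1 ∉ insert (m - a) ((Icc 1 (q - 3)).image fun l => a * l - 1) ∧
      m - a ∉ (Icc 1 (q - 3)).image fun l => a * l - 1 := by
  have hm := eq_mul_add_of_eq_mul_sub_one hq hma
  have hbound : ∀ l ∈ Icc 1 (q - 3), a * l - 1 < m - a := fun l hl => by
    have := le_mul_and_mul_le a (mem_Icc.mp hl)
    omega
  simp only [mem_insert, mem_image, not_or, not_exists, not_and]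
  exact ⟨⟨by omega, fun l hl h => by have := hbound l hl; omega⟩,
    fun l hl h => by have := hbound l hl; omega⟩

lemma sum_exponentSet (hq : 3 ≤ q) (ha : 2 ≤ a) (hma : m = a * (q - 1) + 1) :
    ∑ e ∈ exponentSet q m a, q ^ e
      = q ^ (m - 1) + q ^ (m - a) + ∑ l ∈ Icc 1 (q - 3), q ^ (a * l - 1) := by
  obtain ⟨h1, h2⟩ := exponentSet_notMem hq ha hma
  rw [exponentSet, sum_insert h1, sum_insert h2, sum_image (mul_sub_one_injOn (by omega)),
    add_assoc]

lemma card_exponentSet (hq : 3 ≤ q) (ha : 2 ≤ a) (hma : m = a * (q - 1) + 1) :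
    #(exponentSet q m a) = q - 1 := by
  obtain ⟨h1, h2⟩ := exponentSet_notMem hq ha hma
  rw [exponentSet, card_insert_of_notMem h1, card_insert_of_notMem h2,
    card_image_of_injOn (mul_sub_one_injOn (by omega)), Nat.card_Icc]
  omega

lemma eq_sub_one_of_add_modEq (hq : 3 ≤ q) (hma : m = a * (q - 1) + 1) {e e' d : ℕ}
    (he : e ∈ exponentSet q m a) (he' : e' ∈ exponentSet q m a) (hd : 0 < d) (hda : d < a)
    (h : e' + d ≡ e [MOD m]) : e = m - 1 := by
  have hm := eq_mul_add_of_eq_mul_sub_one hq hma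
  have ha : 0 < a := by omega
  have hlt : ∀ x ∈ exponentSet q m a, x < m := fun x hx =>
    mem_range.mp (exponentSet_subset_range hq ha hma hx)
  have hwrap : e' + d = e ∨ e' + d = e + m := by
    have h' : (e' + d) % m = e := by rw [h, Nat.mod_eq_of_lt (hlt e he)]
    have := hlt e' he'
    rcases Nat.lt_or_ge (e' + d) m with hs | hs
    · rw [Nat.mod_eq_of_lt hs] at h'; omega
    · rw [Nat.mod_eq_sub_mod hs, Nat.mod_eq_of_lt (by omega)] at h'; omega
  have hsteps : ∀ x y : ℕ, a * x + d ≠ a * y := fun x y hxy => by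
    have := congrArg (· % a) hxy
    simp only [Nat.mul_add_mod_self_left, Nat.mod_eq_of_lt hda, Nat.mul_mod_right] at this
    omega
  rcases mem_exponentSet.mp he with rfl | rfl | ⟨l, hl, rfl⟩
  · rfl
  · rcases mem_exponentSet.mp he' with rfl | rfl | ⟨l', hl', rfl⟩
    · omega
    · omega
    · have := le_mul_and_mul_le a hl'
      omega
  · have := le_mul_and_mul_le a hl
    rcases mem_exponentSet.mp he' with rfl | rfl | ⟨l', hl', rfl⟩
    · omega
    · omega
    · have := le_mul_and_mul_le a hl'
      have := hsteps l' l
      omega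

lemma sum_rotMod_exponentSet_lt (hq : 3 ≤ q) (ha : 2 ≤ a) (hma : m = a * (q - 1) + 1)
    {j : ℕ} (hj : j % m ≠ 0) :
    ∑ k ∈ rotMod m j (exponentSet q m a), q ^ k < ∑ e ∈ exponentSet q m a, q ^ e := by
  have hm := eq_mul_add_of_eq_mul_sub_one hq hma
  have hE := exponentSet_subset_range hq (by omega) hma
  have hP : q ^ (m - 1) + q ^ (m - a) ≤ ∑ e ∈ exponentSet q m a, q ^ e := by
    rw [sum_exponentSet hq ha hma]
    exact Nat.le_add_right _ _
  have hT : ∀ k ∈ rotMod m j (exponentSet q m a), k < m := fun k hk =>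
    mem_range.mp (rotMod_subset_range (by omega) j hk)
  by_cases htop : m - 1 ∈ rotMod m j (exponentSet q m a)
  · suffices hgap : ∀ k ∈ rotMod m j (exponentSet q m a), k < m - a ∨ k = m - 1 from
      (geomSum_lt_pow_add_pow (by omega) hgap).trans_le hP
    intro k hk
    by_contra! hk'
    obtain ⟨e, he, hej⟩ := mem_image.mp htop
    obtain ⟨e', he', hek⟩ := mem_image.mp hk
    have hclose : e' + (m - 1 - k) ≡ e [MOD m] := by
      refine Nat.ModEq.add_right_cancel' j ?_
      calc e' + (m - 1 - k) + j = (e' + j) + (m - 1 - k) := by ring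
        _ ≡ k + (m - 1 - k) [MOD m] := by rw [← hek]; exact (Nat.mod_modEq _ _).symm.add_right _
        _ = (e + j) % m := by have := hT k hk; omega
        _ ≡ e + j [MOD m] := Nat.mod_modEq _ _
    have he_top := eq_sub_one_of_add_modEq hq hma he he'
      (by have := hT k hk; omega) (by omega) hclose
    subst he_top
    have : m - 1 + j ≡ m - 1 + 0 [MOD m] := by
      rw [add_zero]; exact hej.trans (Nat.mod_eq_of_lt (by omega)).symm
    exact hj (Nat.ModEq.add_left_cancel' _ this)
  · have hbelow : ∀ k ∈ rotMod m j (exponentSet q m a), k < m - 1 := fun k hk => by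
      have := hT k hk
      have : k ≠ m - 1 := ne_of_mem_of_not_mem hk htop
      omega
    exact (Nat.geomSum_lt (by omega) hbelow).trans_le (le_self_add.trans hP)

lemma sub_one_dvd_sub_sum_exponentSet (hq : 3 ≤ q) (ha : 2 ≤ a) (hma : m = a * (q - 1) + 1) :
    q - 1 ∣ q ^ m - 1 - ∑ e ∈ exponentSet q m a, q ^ e := by
  refine Nat.dvd_sub (Nat.sub_one_dvd_pow_sub_one q m) (Nat.modEq_zero_iff_dvd.mp ?_)
  have := geomSum_modEq_card (by omega : 0 < q) (exponentSet q m a)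
  rwa [card_exponentSet hq ha hma, Nat.ModEq, Nat.mod_self] at this

lemma mod_eq_zero_of_rotMod_exponentSet_eq (hq : 3 ≤ q) (ha : 2 ≤ a)
    (hma : m = a * (q - 1) + 1) {j : ℕ}
    (hj : rotMod m j (exponentSet q m a) = exponentSet q m a) : j % m = 0 := by
  by_contra hj'
  have := sum_rotMod_exponentSet_lt hq ha hma hj'
  rw [hj] at this
  exact lt_irrefl _ this

lemma sum_rotMod_exponentSet_le (hq : 3 ≤ q) (ha : 2 ≤ a) (hma : m = a * (q - 1) + 1) (j : ℕ) :
    ∑ k ∈ rotMod m j (exponentSet q m a), q ^ k ≤ ∑ e ∈ exponentSet q m a, q ^ e := by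
  by_cases hj : j % m = 0
  · rw [rotMod_of_mod_eq_zero (exponentSet_subset_range hq (by omega) hma) hj]
  · exact (sum_rotMod_exponentSet_lt hq ha hma hj).le

end ExponentSet

end CyclotomicCoset

theorem stmt_12_general (q m a : ℕ) (hq : 3 < q)
    (ha : 3 ≤ a) (hma : m = a * (q - 1) + 1) :
    (∀ j : ℕ,
      (q ^ m - 1 - q ^ (m - 1) - q ^ (m - a) - ∑ l ∈ Finset.Icc 1 (q - 3), q ^ (a * l - 1))
          / (q - 1)
        ≤ ((q ^ m - 1 - q ^ (m - 1) - q ^ (m - a)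
              - ∑ l ∈ Finset.Icc 1 (q - 3), q ^ (a * l - 1)) / (q - 1))
            * q ^ j % ((q ^ m - 1) / (q - 1))) ∧
    (Finset.image
      (fun j : ℕ =>
        ((q ^ m - 1 - q ^ (m - 1) - q ^ (m - a)
            - ∑ l ∈ Finset.Icc 1 (q - 3), q ^ (a * l - 1)) / (q - 1))
          * q ^ j % ((q ^ m - 1) / (q - 1)))
      (Finset.range m)).card = m := by
  open CyclotomicCoset Finset in
  have hq' : 3 ≤ q := hq.le
  have ha' : 2 ≤ a := by omega
  have hm : 0 < m := by omega
  have hE := exponentSet_subset_range hq' (by omega) hma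
  have hdvd := sub_one_dvd_sub_sum_exponentSet hq' ha' hma
  have hcoset := sub_one_mul_mod_div_eq (by omega) hm hE (insert_nonempty _ _) hdvd
  have hnum : q ^ m - 1 - q ^ (m - 1) - q ^ (m - a) - ∑ l ∈ Icc 1 (q - 3), q ^ (a * l - 1)
      = q ^ m - 1 - ∑ e ∈ exponentSet q m a, q ^ e := by
    rw [sum_exponentSet hq' ha' hma]; omega
  rw [hnum]
  constructor
  · intro j
    refine Nat.le_of_mul_le_mul_left ?_ (by omega : 0 < q - 1)
    rw [hcoset, Nat.mul_div_cancel' hdvd]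
    exact Nat.sub_le_sub_left (sum_rotMod_exponentSet_le hq' ha' hma j) _
  · rw [card_image_of_injOn, card_range]
    intro j hj k hk hjk
    refine sub_sum_rotMod_injOn (q := q) (by omega) hm hE
      (fun _ => mod_eq_zero_of_rotMod_exponentSet_eq hq' ha' hma) hj hk ?_
    simpa only [hcoset] using congrArg ((q - 1) * ·) hjk

/-- for q > 3, m = a(q-1)+1 with a ≥ 3 and m ≥ q, the integer
δ₂ = (q^m - 1 - q^{m-1} - q^{m-a} - Σ_{l=1}^{q-3} q^{al-1})/(q-1) is a
q-cyclotomic coset leader modulo n = (q^m-1)/(q-1), and its coset has exactly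
m elements. -/
theorem stmt_12 (q m a : ℕ) (hq : 3 < q) (hm : q ≤ m)
    (ha : 3 ≤ a) (hma : m = a * (q - 1) + 1) :
    (∀ j : ℕ,
      (q ^ m - 1 - q ^ (m - 1) - q ^ (m - a) - ∑ l ∈ Finset.Icc 1 (q - 3), q ^ (a * l - 1))
          / (q - 1)
        ≤ ((q ^ m - 1 - q ^ (m - 1) - q ^ (m - a)
              - ∑ l ∈ Finset.Icc 1 (q - 3), q ^ (a * l - 1)) / (q - 1))
            * q ^ j % ((q ^ m - 1) / (q - 1))) ∧
    (Finset.image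
      (fun j : ℕ =>
        ((q ^ m - 1 - q ^ (m - 1) - q ^ (m - a)
            - ∑ l ∈ Finset.Icc 1 (q - 3), q ^ (a * l - 1)) / (q - 1))
          * q ^ j % ((q ^ m - 1) / (q - 1)))
      (Finset.range m)).card = m :=
  stmt_12_general q m a hq ha hma
end

section
/- Let q ≥ 3, m ≥ 4, n = (q^m - 1)/(q-1), and let δ₁ = (q^m - 1 - Σ_{t=1}^{q-1} q^{⌈mt/(q-1) - 1⌉})/(q-1) be the largest q-cyclotomic coset leader modulo n. Then the coset leader of n - δ₁ modulo n is strictly greater than q + 1; in particular, for every 2 ≤ δ ≤ q-1, the coset leader of n - δ₁ is greater than δ. -/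
private lemma pow_mod_cast (N q m a : ℕ) (hN : q ^ m = N + 1) :
    (q : ZMod N) ^ a = (q : ZMod N) ^ (a % m) := by
  conv_lhs => rw [← Nat.div_add_mod a m]
  rw [pow_add, pow_mul]
  have h1 : (q : ZMod N) ^ m = 1 := by
    have h2 : ((q ^ m : ℕ) : ZMod N) = ((N + 1 : ℕ) : ZMod N) := by rw [hN]
    push_cast at h2
    simpa using h2
  rw [h1, one_pow, one_mul]

private lemma key (q m : ℕ) (hq : 3 ≤ q) (hm : 4 ≤ m)
    (comb : ∀ j : ℕ, j < m → ∃ t ∈ Finset.Icc 1 (q - 1),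
      2 ≤ (((m * t + q - 2) / (q - 1) - 1) + j) % m)
    (j : ℕ) (hj : j < m) :
    q + 1 <
        (((q ^ m - 1) / (q - 1)
            - (q ^ m - 1 - ∑ t ∈ Finset.Icc 1 (q - 1),
                q ^ ((m * t + q - 2) / (q - 1) - 1)) / (q - 1))
          * q ^ j) % ((q ^ m - 1) / (q - 1)) := by
  set K := q - 1 with hKdef
  set N := q ^ m - 1 with hNdef
  set S := ∑ t ∈ Finset.Icc 1 K, q ^ ((m * t + q - 2) / K - 1) with hSdef
  set n := N / K with hndef
  have hK : 2 ≤ K := by omega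
  have hKpos : 0 < K := by omega
  have hqm : q ^ m ≥ q ^ 4 := Nat.pow_le_pow_right (by omega) hm
  have hq4 : q ^ 4 = q*q*q*q := by ring
  have hNlarge : q*q*q*q ≤ N + 1 := by omega
  have hqq : 9 ≤ q * q := Nat.mul_le_mul hq hq
  have hNpos : 0 < N := by nlinarith
  have hdvd : K ∣ N := by simpa using Nat.sub_dvd_pow_sub_pow q 1 m
  have hnK : n * K = N := Nat.div_mul_cancel hdvd
  have hN1 : q ^ m = N + 1 := by omega
  -- each exponent is ≤ m - 1
  have hexp : ∀ t ∈ Finset.Icc 1 K, (m * t + q - 2) / K - 1 ≤ m - 1 := by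
    intro t ht
    rw [Finset.mem_Icc] at ht
    have h1a : m * t ≤ m * K := Nat.mul_le_mul_left m ht.2
    have h1b : m * K = K * m := mul_comm m K
    have h1 : m * t + q - 2 ≤ K * m + (K - 1) := by omega
    have h2 : (m * t + q - 2) / K ≤ m := by
      calc (m * t + q - 2) / K ≤ (K * m + (K - 1)) / K := Nat.div_le_div_right h1
        _ = m := by rw [Nat.mul_add_div hKpos, Nat.div_eq_of_lt (by omega)]; omega
    omega
  -- S bound
  have hScard : (Finset.Icc 1 K).card = K := by rw [Nat.card_Icc]; omega
  have hSle : S ≤ K * q ^ (m - 1) := by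
    calc S ≤ ∑ _t ∈ Finset.Icc 1 K, q ^ (m - 1) :=
        Finset.sum_le_sum (fun t ht => Nat.pow_le_pow_right (by omega) (hexp t ht))
      _ = K * q ^ (m - 1) := by rw [Finset.sum_const, hScard, smul_eq_mul]
  have hq1m : q ^ 1 ≤ q ^ (m - 1) := Nat.pow_le_pow_right (by omega) (by omega)
  have hq1m' : 2 ≤ q ^ (m - 1) := by rw [pow_one] at hq1m; omega
  have hKq : K * q ^ (m - 1) < N := by
    have hp : q ^ m = q ^ (m - 1) * q := by rw [← pow_succ]; congr 1; omega
    have h1 : K * q ^ (m - 1) = q ^ (m - 1) * q - q ^ (m - 1) := by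
      rw [hKdef, mul_comm, Nat.mul_sub, mul_one]
    omega
  have hSN : S < N := lt_of_le_of_lt hSle hKq
  -- K ∣ S
  have hKS : K ∣ S := by
    have h2 : S = ∑ t ∈ Finset.Icc 1 K, ((q ^ ((m * t + q - 2) / K - 1) - 1) + 1) :=
      Finset.sum_congr rfl (fun t ht => by
        have : 1 ≤ q ^ ((m * t + q - 2) / K - 1) := Nat.one_le_pow _ _ (by omega)
        omega)
    have h1 : S = (∑ t ∈ Finset.Icc 1 K, (q ^ ((m * t + q - 2) / K - 1) - 1)) + K := by
      rw [h2, Finset.sum_add_distrib, Finset.sum_const, hScard, smul_eq_mul, mul_one]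
    rw [h1]
    exact dvd_add (Finset.dvd_sum fun t _ => by
      simpa using Nat.sub_dvd_pow_sub_pow q 1 ((m * t + q - 2) / K - 1)) dvd_rfl
  have hdvdNS : K ∣ N - S := Nat.dvd_sub hdvd hKS
  set δ := (N - S) / K with hδdef
  have hδK : δ * K = N - S := Nat.div_mul_cancel hdvdNS
  have hxK : (n - δ) * K = S := by
    rw [Nat.sub_mul]
    omega
  by_contra hy
  push_neg at hy
  have hnpos : 0 < n := by
    rcases Nat.eq_zero_or_pos n with h | h
    · rw [h] at hnK; simp at hnK; omega
    · exact h
  set y := ((n - δ) * q ^ j) % n with hydef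
  have hyn : y < n := Nat.mod_lt _ hnpos
  have hdiv := Nat.div_add_mod ((n - δ) * q ^ j) n
  set d := (n - δ) * q ^ j / n with hddef
  have heq : S * q ^ j = N * d + y * K := by
    have h3 : ((n - δ) * q ^ j) * K = (n * d + y) * K := by rw [hdiv]
    calc S * q ^ j = ((n - δ) * K) * q ^ j := by rw [hxK]
      _ = ((n - δ) * q ^ j) * K := by ring
      _ = (n * d + y) * K := h3
      _ = (n * K) * d + y * K := by ring
      _ = N * d + y * K := by rw [hnK]
  set R := ∑ t ∈ Finset.Icc 1 K, q ^ ((((m * t + q - 2) / K - 1) + j) % m) with hRdef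
  have hRcast : ((R : ℕ) : ZMod N) = ((S * q ^ j : ℕ) : ZMod N) := by
    rw [hRdef, hSdef]
    push_cast [Finset.sum_mul, ← pow_add]
    exact Finset.sum_congr rfl (fun t _ => (pow_mod_cast N q m _ hN1).symm)
  have hycast : ((y * K : ℕ) : ZMod N) = ((S * q ^ j : ℕ) : ZMod N) := by
    rw [heq]
    push_cast [ZMod.natCast_self]
    ring
  have hRN : R < N := by
    have hle : R ≤ K * q ^ (m - 1) := by
      calc R ≤ ∑ _t ∈ Finset.Icc 1 K, q ^ (m - 1) :=
          Finset.sum_le_sum (fun t ht => Nat.pow_le_pow_right (by omega)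
            (by have := Nat.mod_lt ((((m * t + q - 2) / K - 1) + j)) (show 0 < m by omega); omega))
        _ = K * q ^ (m - 1) := by rw [Finset.sum_const, hScard, smul_eq_mul]
    omega
  have hyle : y * K ≤ (q + 1) * (q - 1) := Nat.mul_le_mul_right _ hy
  have hfact : (q + 1) * (q - 1) + 1 = q * q := by
    obtain ⟨p, rfl⟩ := Nat.exists_eq_add_of_le hq
    have h4 : 3 + p - 1 = p + 2 := by omega
    rw [h4]; ring
  have hq4' : q * q * q * q = q * q * (q * q) := by ring
  have h9 : 9 * (q * q) ≤ q * q * (q * q) := by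
    rw [mul_comm 9 (q*q)]
    exact Nat.mul_le_mul_left _ hqq
  have hyK : y * K < N := by omega
  have hmod : y * K ≡ R [MOD N] :=
    (ZMod.natCast_eq_natCast_iff _ _ _).mp (by rw [hycast, hRcast])
  have hyR : y * K = R := by
    have h1 := Nat.mod_eq_of_lt hyK
    have h2 := Nat.mod_eq_of_lt hRN
    unfold Nat.ModEq at hmod
    omega
  obtain ⟨t0, ht0, ht02⟩ := comb j hj
  have hterm : q ^ ((((m * t0 + q - 2) / K - 1) + j) % m) ≤ R := by
    rw [hRdef]
    exact Finset.single_le_sum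
      (f := fun t => q ^ ((((m * t + q - 2) / K - 1) + j) % m))
      (fun t _ => Nat.zero_le _) ht0
  have hq2 : q * q ≤ q ^ ((((m * t0 + q - 2) / K - 1) + j) % m) := by
    calc q * q = q ^ 2 := by ring
      _ ≤ _ := Nat.pow_le_pow_right (by omega) ht02
  omega


private lemma comb (q m : ℕ) (hq : 3 ≤ q) (hm : 4 ≤ m) (j : ℕ) (hj : j < m) :
    ∃ t ∈ Finset.Icc 1 (q - 1),
      2 ≤ (((m * t + q - 2) / (q - 1) - 1) + j) % m := by
  set K := q - 1 with hKdef
  have hK : 2 ≤ K := by omega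
  have hKpos : 0 < K := by omega
  -- e K = m - 1
  have heK : (m * K + q - 2) / K - 1 = m - 1 := by
    have h1 : m * K + q - 2 = K * m + (K - 1) := by rw [mul_comm]; omega
    rw [h1, Nat.mul_add_div hKpos, Nat.div_eq_of_lt (by omega)]
    omega
  have hKmem : K ∈ Finset.Icc 1 K := by simp; omega
  rcases le_or_gt m K with hmK | hKm
  · -- case m ≤ K : e 1 = 0, e (K/m+1) = 1
    have he1 : (m * 1 + q - 2) / K - 1 = 0 := by
      have h1 : (m * 1 + q - 2) / K = 1 := Nat.div_eq_of_lt_le (by omega) (by omega)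
      omega
    set t1 := K / m + 1 with ht1def
    have hdm : m * (K / m) ≤ K := by
      have := Nat.div_mul_le_self K m
      rw [mul_comm]; omega
    have hdm2 : K < m * (K / m) + m := by
      have h1 := Nat.div_add_mod K m
      have h2 : K % m < m := Nat.mod_lt _ (by omega)
      omega
    have ht1K : t1 ≤ K := by
      have : K / m < K := Nat.div_lt_self (by omega) (by omega)
      omega
    have ht1mem : t1 ∈ Finset.Icc 1 K :=
      Finset.mem_Icc.mpr ⟨Nat.le_add_left 1 (K / m), ht1K⟩
    have het1 : (m * t1 + q - 2) / K - 1 = 1 := by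
      have hnum : m * t1 = m * (K / m) + m := by rw [ht1def, Nat.mul_add, mul_one]
      have h1 : (m * t1 + q - 2) / K = 2 := Nat.div_eq_of_lt_le (by omega) (by omega)
      omega
    -- split on j
    rcases Nat.lt_or_ge j 2 with hj2 | hj2
    · rcases Nat.lt_or_ge j 1 with hj0 | hj1
      · -- j = 0, use K
        refine ⟨K, hKmem, ?_⟩
        rw [heK, Nat.mod_eq_of_lt (by omega)]
        omega
      · -- j = 1, use t1
        refine ⟨t1, ht1mem, ?_⟩
        rw [het1]
        rw [Nat.mod_eq_of_lt (by omega)]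
        omega
    · -- j ≥ 2, use 1
      refine ⟨1, by simp; omega, ?_⟩
      rw [he1, Nat.mod_eq_of_lt (by omega)]
      omega
  · -- case K < m
    have he1lb : 2 ≤ (m * 1 + q - 2) / K := by
      rw [Nat.le_div_iff_mul_le hKpos]; omega
    have he1ub : (m * 1 + q - 2) / K ≤ m - 2 := by
      have h1 : (m * 1 + q - 2) / K < m - 1 := by
        rw [Nat.div_lt_iff_lt_mul hKpos]
        have h2 : 2 * (m - 2) ≤ K * (m - 2) := Nat.mul_le_mul_right _ hK
        have h3 : (m - 1) * K = K * (m - 2) + K := by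
          rw [mul_comm, show m - 1 = (m - 2) + 1 by omega, Nat.mul_succ]
        omega
      omega
    set e1 := (m * 1 + q - 2) / K - 1 with he1def
    have he1b : 1 ≤ e1 ∧ e1 + 3 ≤ m := by omega
    -- claim: one of t = 1, t = K works
    by_contra hcon
    push_neg at hcon
    have hc1 := hcon 1 (by simp; omega)
    have hcK := hcon K hKmem
    rw [heK] at hcK
    -- decompose
    have hd1 : e1 + j = m * ((e1 + j) / m) + (e1 + j) % m := (Nat.div_add_mod _ _).symm
    have hdK : m - 1 + j = m * ((m - 1 + j) / m) + (m - 1 + j) % m := (Nat.div_add_mod _ _).symm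
    have hq1 : (e1 + j) / m < 2 := by
      rw [Nat.div_lt_iff_lt_mul (by omega : 0 < m)]; omega
    have hqK : (m - 1 + j) / m < 2 := by
      rw [Nat.div_lt_iff_lt_mul (by omega : 0 < m)]; omega
    have hr1 : (e1 + j) % m < m := Nat.mod_lt _ (by omega)
    have hrK : (m - 1 + j) % m < m := Nat.mod_lt _ (by omega)
    set a := (e1 + j) % m
    set b := (m - 1 + j) % m
    set k1 := (e1 + j) / m
    set k2 := (m - 1 + j) / m
    interval_cases k1 <;> interval_cases k2 <;> omega


/-- with δ₁ = (q^m - 1 - Σ_{t=1}^{q-1} q^{⌈mt/(q-1)-1⌉})/(q-1)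
the largest coset leader modulo n = (q^m-1)/(q-1), every element of the
q-cyclotomic coset of n - δ₁ is strictly greater than q+1; in particular the
coset leader of n - δ₁ exceeds every δ with 2 ≤ δ ≤ q-1. -/
theorem stmt_13 (q m : ℕ) (hq : 3 ≤ q) (hm : 4 ≤ m) :
    (∀ j : ℕ, j < m →
      q + 1 <
        (((q ^ m - 1) / (q - 1)
            - (q ^ m - 1 - ∑ t ∈ Finset.Icc 1 (q - 1),
                q ^ ((m * t + q - 2) / (q - 1) - 1)) / (q - 1))
          * q ^ j) % ((q ^ m - 1) / (q - 1))) ∧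
    ∀ δ : ℕ, 2 ≤ δ → δ ≤ q - 1 → ∀ j : ℕ, j < m →
      δ <
        (((q ^ m - 1) / (q - 1)
            - (q ^ m - 1 - ∑ t ∈ Finset.Icc 1 (q - 1),
                q ^ ((m * t + q - 2) / (q - 1) - 1)) / (q - 1))
          * q ^ j) % ((q ^ m - 1) / (q - 1)) := by
  constructor
  · exact fun j hj => key q m hq hm (comb q m hq hm) j hj
  · intro δ hδ2 hδK j hj
    exact lt_trans (show δ < q + 1 by omega) (key q m hq hm (comb q m hq hm) j hj)
end

section
/- Let q ≥ 2, m = 2s with s ≥ 2, n = q^m - 1, and let a = c(q^s + 1) with 1 ≤ c ≤ q-1. Then a is a q-cyclotomic coset leader modulo n and its q-cyclotomic coset has exactly s = m/2 elements. -/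
/-- for m = 2s, n = q^m - 1 and a = c(q^s+1) with 1 ≤ c ≤ q-1,
a is a q-cyclotomic coset leader modulo n and its coset has exactly s = m/2
elements. -/
theorem stmt_15 (q s c : ℕ) (hq : 2 ≤ q) (hs : 2 ≤ s)
    (hc1 : 1 ≤ c) (hc2 : c ≤ q - 1) :
    (∀ j : ℕ, c * (q ^ s + 1) ≤ c * (q ^ s + 1) * q ^ j % (q ^ (2 * s) - 1)) ∧
    (Finset.image (fun j : ℕ => c * (q ^ s + 1) * q ^ j % (q ^ (2 * s) - 1))
      (Finset.range (2 * s))).card = s := by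
  set a := c * (q ^ s + 1) with ha
  set n := q ^ (2 * s) - 1 with hn
  have hq1 : 1 ≤ q := by omega
  have hq2s : 2 ≤ q ^ (2 * s) := by
    calc 2 ≤ q := hq
    _ ≤ q ^ (2 * s) := Nat.le_self_pow (by omega) q
  have hn1 : n + 1 = q ^ (2 * s) := by omega
  have hnpos : 0 < n := by omega
  have hspos : 0 < s := by omega
  have hcq : c + 1 ≤ q := by omega
  -- key identity
  have hkey : a * q ^ s = a + c * n := by
    have h2 : q ^ s * q ^ s = n + 1 := by rw [hn1, two_mul, pow_add]
    calc a * q ^ s = c * (q ^ s * q ^ s) + c * q ^ s := by rw [ha]; ring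
      _ = c * (n + 1) + c * q ^ s := by rw [h2]
      _ = a + c * n := by rw [ha]; ring
  have hstep : ∀ j : ℕ, a * q ^ (j + s) % n = a * q ^ j % n := by
    intro j
    have h : a * q ^ (j + s) = a * q ^ j + (c * q ^ j) * n := by
      rw [pow_add, show a * (q ^ j * q ^ s) = a * q ^ s * q ^ j by ring, hkey]; ring
    rw [h, Nat.add_mul_mod_self_right]
  have hmod : ∀ j : ℕ, a * q ^ j % n = a * q ^ (j % s) % n := by
    intro j
    induction j using Nat.strong_induction_on with
    | _ j ih =>
      by_cases h : j < s
      · rw [Nat.mod_eq_of_lt h]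
      · push_neg at h
        have hj : j = (j - s) + s := by omega
        calc a * q ^ j % n = a * q ^ ((j - s) + s) % n := by rw [← hj]
          _ = a * q ^ (j - s) % n := hstep _
          _ = a * q ^ ((j - s) % s) % n := ih _ (by omega)
          _ = a * q ^ (j % s) % n := by rw [← Nat.mod_eq_sub_mod h]
  have hsmall : ∀ r : ℕ, r < s → a * q ^ r < n := by
    intro r hr
    have h1 : q ^ r ≤ q ^ (s - 1) := Nat.pow_le_pow_right hq1 (by omega)
    have h2 : q ^ s = q ^ (s - 1) * q := by rw [← pow_succ]; congr 1; omega
    have h3 : q ^ (2 * s) = q ^ s * q ^ s := by rw [two_mul, pow_add]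
    have hA : 2 ≤ q ^ (s - 1) := by
      calc 2 ≤ q := hq
      _ ≤ q ^ (s - 1) := Nat.le_self_pow (by omega) q
    have key : a * q ^ r + 1 < q ^ (2 * s) := by
      rw [ha, h3, h2]
      set A := q ^ (s - 1) with hAdef
      have step1 : c * (A * q + 1) * q ^ r ≤ c * (A * q + 1) * A := by gcongr
      have step2 : c * (A * q + 1) * A + 1 < A * q * (A * q) := by nlinarith [Nat.mul_le_mul_right (A*A*q) hcq, Nat.mul_le_mul_right A hcq, Nat.mul_le_mul_right (A*q) hA, Nat.mul_le_mul hq hA]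
      omega
    omega
  have hred : ∀ j : ℕ, a * q ^ j % n = a * q ^ (j % s) := by
    intro j
    rw [hmod j, Nat.mod_eq_of_lt (hsmall _ (Nat.mod_lt j hspos))]
  constructor
  · intro j
    rw [hred j]
    exact Nat.le_mul_of_pos_right a (pow_pos (by omega) _)
  · have himg : Finset.image (fun j : ℕ => a * q ^ j % n) (Finset.range (2 * s))
        = Finset.image (fun j : ℕ => a * q ^ j) (Finset.range s) := by
      ext x
      simp only [Finset.mem_image, Finset.mem_range]
      constructor
      · rintro ⟨j, hj, rfl⟩
        exact ⟨j % s, Nat.mod_lt j hspos, (hred j).symm⟩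
      · rintro ⟨j, hj, rfl⟩
        exact ⟨j, by omega, by rw [hred j, Nat.mod_eq_of_lt hj]⟩
    rw [himg, Finset.card_image_of_injOn, Finset.card_range]
    intro x hx y hy hxy
    have hapos : 0 < a := by positivity
    have := Nat.eq_of_mul_eq_mul_left hapos hxy
    exact Nat.pow_right_injective hq this
end

section
/- Let q ≥ 2, s ≥ 2 odd, m = 2s, n = (q^{2s}-1)/(q+1), and δ₁ = ((q-1)q^{2s-1} - q^{s-1} - 1)/(q+1). Then n - δ₁ = (q^{2s-1} + q^{s-1})/(q+1), and the coset leader of n - δ₁ modulo n equals (q^s + 1)/(q+1), i.e., (n - δ₁)·q^j ≡ (q^s+1)/(q+1) (mod n) for some j, and (q^s+1)/(q+1) is the minimum of the q-cyclotomic coset of n - δ₁. -/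
/-- with n = (q^{2s}-1)/(q+1) and
δ₁ = ((q-1)q^{2s-1}-q^{s-1}-1)/(q+1), one has
n - δ₁ = (q^{2s-1}+q^{s-1})/(q+1), the value (q^s+1)/(q+1) lies in the
q-cyclotomic coset of n - δ₁, and it is the minimum of that coset. -/
theorem stmt_19 (q s : ℕ) (hq : 2 ≤ q) (hs : 2 ≤ s) (hsodd : Odd s) :
    (q ^ (2 * s) - 1) / (q + 1) - ((q - 1) * q ^ (2 * s - 1) - q ^ (s - 1) - 1) / (q + 1)
        = (q ^ (2 * s - 1) + q ^ (s - 1)) / (q + 1) ∧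
    (∃ j : ℕ,
      ((q ^ (2 * s) - 1) / (q + 1)
          - ((q - 1) * q ^ (2 * s - 1) - q ^ (s - 1) - 1) / (q + 1)) * q ^ j
        % ((q ^ (2 * s) - 1) / (q + 1)) = (q ^ s + 1) / (q + 1)) ∧
    ∀ j : ℕ,
      (q ^ s + 1) / (q + 1)
        ≤ ((q ^ (2 * s) - 1) / (q + 1)
            - ((q - 1) * q ^ (2 * s - 1) - q ^ (s - 1) - 1) / (q + 1)) * q ^ j
          % ((q ^ (2 * s) - 1) / (q + 1)) := by
  obtain ⟨c, hc⟩ : q + 1 ∣ q ^ s + 1 := by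
    simpa using hsodd.nat_add_dvd_pow_add_pow q 1
  obtain ⟨a, rfl⟩ : ∃ a, s = a + 1 := ⟨s - 1, by omega⟩
  have ha : 1 ≤ a := by omega
  have h2s1 : 2 * (a + 1) - 1 = 2 * a + 1 := by omega
  have hs1 : a + 1 - 1 = a := by omega
  rw [h2s1, hs1]
  have hu1 : 1 ≤ q ^ a := Nat.one_le_pow _ _ (by omega)
  have hu2 : 2 ≤ q ^ a := by
    calc 2 = 2^1 := rfl
    _ ≤ q ^ a := Nat.pow_le_pow_left (by omega) 1 |>.trans (Nat.pow_le_pow_right (by omega) ha)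
  have hts : q ^ (a + 1) = q ^ a * q := pow_succ q a
  have hts2 : 2 * q ^ a ≤ q ^ (a + 1) := by rw [hts]; nlinarith
  have ht1 : 1 ≤ q ^ (a + 1) := Nat.one_le_pow _ _ (by omega)
  have hc0 : 0 < c := by nlinarith [ht1]
  have hcz : (q : ℤ) ^ (a + 1) + 1 = (q + 1) * c := by exact_mod_cast hc
  have h2a : q ^ a * q ^ (a + 1) = q ^ (2 * a + 1) := by
    rw [← pow_add]; congr 1; omega
  -- key numerator factorizations
  have hT1 : 1 ≤ q ^ (2 * (a + 1)) := Nat.one_le_pow _ _ (by omega)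
  have h1 : q ^ (2 * (a + 1)) - 1 = (q + 1) * ((q ^ (a + 1) - 1) * c) := by
    zify [ht1, hT1]
    linear_combination ((q:ℤ)^(a+1) - 1) * hcz
  have hA : q ^ a + 2 ≤ (q - 1) * q ^ (2 * a + 1) := by
    have h1q : 1 ≤ q - 1 := by omega
    calc q ^ a + 2 ≤ 2 * q ^ a * 2 := by omega
    _ ≤ q ^ (a+1) * q ^ a := by nlinarith
    _ ≤ 1 * q ^ (2*a+1) := by rw [one_mul, ← h2a]; nlinarith
    _ ≤ (q - 1) * q ^ (2 * a + 1) := by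
        exact Nat.mul_le_mul_right _ h1q
  have hB : q ^ a + 1 ≤ q ^ (a + 1) := by omega
  have h2 : (q - 1) * q ^ (2 * a + 1) - q ^ a - 1
      = (q + 1) * ((q ^ (a + 1) - 1 - q ^ a) * c) := by
    zify [ht1, (by omega : 1 ≤ q), (by omega : q ^ a ≤ q ^ (a+1) - 1),
      (by omega : q ^ a ≤ (q - 1) * q ^ (2*a+1)),
      (by omega : 1 ≤ (q - 1) * q ^ (2*a+1) - q ^ a)]
    have hz2a : ((q:ℤ))^a * q^(a+1) = q^(2*a+1) := by exact_mod_cast h2a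
    linear_combination ((q:ℤ)^(a+1) - 1 - q^a) * hcz + hz2a - (q:ℤ)^a * hz2a
  have h3 : q ^ (2 * a + 1) + q ^ a = (q + 1) * (q ^ a * c) := by
    zify
    have hz2a : ((q:ℤ))^a * q^(a+1) = q^(2*a+1) := by exact_mod_cast h2a
    linear_combination (q:ℤ)^a * hcz - hz2a
  have hq1 : 0 < q + 1 := by omega
  rw [h1, h2, h3, hc, Nat.mul_div_cancel_left _ hq1, Nat.mul_div_cancel_left _ hq1,
    Nat.mul_div_cancel_left _ hq1, Nat.mul_div_cancel_left _ hq1]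
  have hsub : (q ^ (a+1) - 1) * c - (q ^ (a+1) - 1 - q ^ a) * c = q ^ a * c := by
    rw [← Nat.sub_mul]; congr 1; omega
  rw [hsub]
  set n := (q ^ (a+1) - 1) * c with hn
  have hcq : c * q ^ (a + 1) = n + c := by
    rw [hn]; zify [ht1]; ring
  have hcn : c < n := by
    have h2' : 2 ≤ q ^ (a+1) - 1 := by omega
    calc c = 1 * c := (one_mul c).symm
    _ < (q ^ (a+1) - 1) * c := by
        exact (Nat.mul_lt_mul_right hc0).mpr (by omega)
  have hmod : ∀ m r : ℕ, c * q ^ ((a+1) * m + r) % n = c * q ^ r % n := by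
    intro m r
    induction m with
    | zero => simp
    | succ m ih =>
      have he : (a+1) * (m+1) + r = (a+1) + ((a+1) * m + r) := by ring
      rw [he, pow_add, ← mul_assoc, hcq, add_mul, Nat.mul_add_mod]
      exact ih
  have hlt : ∀ r : ℕ, r < a + 1 → c * q ^ r < n := by
    intro r hr
    calc c * q ^ r ≤ c * q ^ a := by
          exact Nat.mul_le_mul_left c (Nat.pow_le_pow_right (by omega) (by omega))
    _ < c * (q ^ (a+1) - 1) := by
          exact (Nat.mul_lt_mul_left hc0).mpr (by omega)
    _ = n := by rw [hn, mul_comm]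
  refine ⟨rfl, ⟨1, ?_⟩, ?_⟩
  · have h4 : q ^ a * c * q ^ 1 = c * q ^ (a + 1) := by rw [hts]; ring
    rw [h4, hcq, Nat.add_mod_left, Nat.mod_eq_of_lt hcn]
  · intro j
    have h5 : q ^ a * c * q ^ j = c * q ^ ((a+1) * ((a + j)/(a+1)) + (a + j) % (a+1)) := by
      rw [Nat.div_add_mod, pow_add]; ring
    rw [h5, hmod, Nat.mod_eq_of_lt (hlt _ (Nat.mod_lt _ (by omega)))]
    calc c = c * 1 := (mul_one c).symm
    _ ≤ c * q ^ ((a + j) % (a+1)) := Nat.mul_le_mul_left c (Nat.one_le_pow _ _ (by omega))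
end
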